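/- arXiv:math/0406031 — 4 statements merged into one kernel-verified Lean document; each statement's English description precedes it below -/
import Mathlib

section
/- Let t(n) denote the minimum of the exterior perimeter t(S) over all sets S of exactly n cells of the hexagonal honeycomb. Then for every n ≥ 2 one has t(n) ≤ t(n+1) ≤ t(n) + 2. -/
/-- The six neighbor directions of the combinatorial hexagonal honeycomb. -/
def hexDirs : Finset (ℤ × ℤ) := {(1,0),(-1,0),(0,1),(0,-1),(1,-1),(-1,1)}

/-- Exterior perimeter: the number of pairs `(x, y)` with `x ∈ S`, `y ∉ S`,
`x` adjacent to `y` (the neighbors of `x` are the cells `x + d`, `d ∈ hexDirs`). -/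
def extPer (S : Finset (ℤ × ℤ)) : ℕ :=
  ∑ x ∈ S, (hexDirs.filter (fun d => x + d ∉ S)).card

/-- `tmin n` is the minimum exterior perimeter over all sets of `n` cells. -/
noncomputable def tmin (n : ℕ) : ℕ :=
  sInf {m : ℕ | ∃ S : Finset (ℤ × ℤ), S.card = n ∧ extPer S = m}

lemma hex_mem_iff {d : ℤ × ℤ} :
    d ∈ hexDirs ↔ d = (1,0) ∨ d = (-1,0) ∨ d = (0,1) ∨ d = (0,-1) ∨ d = (1,-1) ∨ d = (-1,1) := by
  simp [hexDirs]

lemma hex_neg {d : ℤ × ℤ} (h : d ∈ hexDirs) : -d ∈ hexDirs := by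
  rw [hex_mem_iff] at h ⊢
  rcases h with h|h|h|h|h|h <;> subst h <;> simp [Prod.ext_iff]

lemma hex_ne_zero {d : ℤ × ℤ} (h : d ∈ hexDirs) : d ≠ 0 := by
  rw [hex_mem_iff] at h
  rcases h with h|h|h|h|h|h <;> subst h <;> simp [Prod.ext_iff]

lemma hex_card : hexDirs.card = 6 := by decide

lemma padd (x : ℤ × ℤ) (a b c d : ℤ) : x + (a, b) + (c, d) = x + (a + c, b + d) := by
  have h : ((a, b) : ℤ × ℤ) + (c, d) = (a + c, b + d) := Prod.mk_add_mk a c b d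
  rw [add_assoc, h]

lemma per_single (x : ℤ × ℤ) : extPer {x} = 6 := by
  rw [extPer, Finset.sum_singleton, Finset.filter_true_of_mem, hex_card]
  intro d hd
  simp only [Finset.mem_singleton]
  intro h
  exact hex_ne_zero hd (by linear_combination h)

/-- Key formula: removing a cell `x` from `S` changes the perimeter by `2k - 6`
where `k` is the number of neighbors of `x` inside `S`. -/
lemma per_erase (S : Finset (ℤ × ℤ)) {x : ℤ × ℤ} (hx : x ∈ S) :
    extPer (S.erase x) + 6 = extPer S + 2 * (hexDirs.filter (fun d => x + d ∈ S)).card := by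
  classical
  set E := S.erase x with hE
  set k := (hexDirs.filter (fun d => x + d ∈ S)).card with hk
  have hterm : ∀ z ∈ E, (hexDirs.filter (fun d => z + d ∉ E)).card
      = (hexDirs.filter (fun d => z + d ∉ S)).card + (if x - z ∈ hexDirs then 1 else 0) := by
    intro z hz
    have hiff : ∀ d : ℤ × ℤ, (z + d ∉ E) ↔ (z + d ∉ S ∨ z + d = x) := by
      intro d
      simp only [hE, Finset.mem_erase, not_and_or, not_not, not_ne_iff]
      tauto
    have h1 : hexDirs.filter (fun d => z + d ∉ E)
        = hexDirs.filter (fun d => z + d ∉ S) ∪ hexDirs.filter (fun d => z + d = x) := by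
      rw [← Finset.filter_or]
      exact Finset.filter_congr (fun d _ => hiff d)
    have hdisj : Disjoint (hexDirs.filter (fun d => z + d ∉ S))
        (hexDirs.filter (fun d => z + d = x)) := by
      rw [Finset.disjoint_filter]
      intro d _ hdS hdx
      exact hdS (hdx ▸ hx)
    rw [h1, Finset.card_union_of_disjoint hdisj]
    congr 1
    have : hexDirs.filter (fun d => z + d = x) = hexDirs.filter (fun d => d = x - z) := by
      apply Finset.filter_congr
      intro d _
      constructor
      · intro h; simp [← h]
      · intro h; subst h; ring
    rw [this, Finset.filter_eq']
    split_ifs <;> simp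
  have hsum1 : extPer E = (∑ z ∈ E, (hexDirs.filter (fun d => z + d ∉ S)).card)
      + (E.filter (fun z => x - z ∈ hexDirs)).card := by
    rw [extPer, Finset.sum_congr rfl hterm, Finset.sum_add_distrib]
    congr 1
    rw [Finset.card_filter]
  have hbij : (E.filter (fun z => x - z ∈ hexDirs)).card = k := by
    rw [hk]
    apply Finset.card_nbij' (fun z => z - x) (fun d => x + d)
    · intro z hz
      simp only [Finset.mem_coe, Finset.mem_filter] at hz ⊢
      refine ⟨?_, ?_⟩
      · have := hex_neg hz.2
        simpa [neg_sub] using this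
      · have : x + (z - x) = z := by ring
        rw [this]
        exact Finset.mem_of_mem_erase hz.1
    · intro d hd
      simp only [Finset.mem_coe, Finset.mem_filter] at hd ⊢
      refine ⟨Finset.mem_erase.mpr ⟨?_, hd.2⟩, ?_⟩
      · intro h
        exact hex_ne_zero hd.1 (by linear_combination h)
      · have : x - (x + d) = -d := by ring
        rw [this]
        exact hex_neg hd.1
    · intro z _; ring
    · intro d _; ring
  have hsplit : (∑ z ∈ E, (hexDirs.filter (fun d => z + d ∉ S)).card)
      + (hexDirs.filter (fun d => x + d ∉ S)).card = extPer S := by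
    rw [extPer, hE]
    exact Finset.sum_erase_add S _ hx
  have hpart : (hexDirs.filter (fun d => x + d ∉ S)).card + k = 6 := by
    rw [hk, ← hex_card, add_comm]
    exact Finset.card_filter_add_card_filter_not (fun d => x + d ∈ S)
  omega

/-- Adding a cell `y` to `S` changes the perimeter by `6 - 2k` where `k` is the
number of neighbors of `y` inside `S`. -/
lemma per_insert (S : Finset (ℤ × ℤ)) {y : ℤ × ℤ} (hy : y ∉ S) :
    extPer (insert y S) + 2 * (hexDirs.filter (fun d => y + d ∈ S)).card = extPer S + 6 := by
  classical
  have h := per_erase (insert y S) (Finset.mem_insert_self y S)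
  rw [Finset.erase_insert hy] at h
  have hfil : hexDirs.filter (fun d => y + d ∈ insert y S) = hexDirs.filter (fun d => y + d ∈ S) := by
    apply Finset.filter_congr
    intro d hd
    simp only [Finset.mem_insert]
    constructor
    · rintro (h1 | h1)
      · exact absurd (by linear_combination h1) (hex_ne_zero hd)
      · exact h1
    · exact Or.inr
  rw [hfil] at h
  omega

lemma exists_card (n : ℕ) : ∃ S : Finset (ℤ × ℤ), S.card = n := by
  refine ⟨(Finset.range n).image (fun i : ℕ => ((i : ℤ), 0)), ?_⟩
  rw [Finset.card_image_of_injective _ (fun a b h => by simpa using h), Finset.card_range]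

lemma tmin_le {n : ℕ} (S : Finset (ℤ × ℤ)) (h : S.card = n) : tmin n ≤ extPer S :=
  Nat.sInf_le ⟨S, h, rfl⟩

lemma tmin_spec (n : ℕ) : ∃ S : Finset (ℤ × ℤ), S.card = n ∧ extPer S = tmin n := by
  obtain ⟨S, hS⟩ := exists_card n
  exact Nat.sInf_mem (⟨extPer S, S, hS, rfl⟩ :
    Set.Nonempty {m : ℕ | ∃ S : Finset (ℤ × ℤ), S.card = n ∧ extPer S = m})

/-- Extract a "corner" of a finite set: maximal for sum of coordinates, then first coord. -/
lemma exists_corner {T : Finset (ℤ × ℤ)} (hT : T.Nonempty) :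
    ∃ x ∈ T, ∀ z ∈ T, z.1 + z.2 ≤ x.1 + x.2 ∧ (z.1 + z.2 = x.1 + x.2 → z.1 ≤ x.1) := by
  classical
  obtain ⟨m, hmT, hm⟩ := T.exists_max_image (fun z => z.1 + z.2) hT
  set T' := T.filter (fun z => z.1 + z.2 = m.1 + m.2) with hT'
  have hmT' : m ∈ T' := Finset.mem_filter.mpr ⟨hmT, rfl⟩
  obtain ⟨x, hxT', hx⟩ := T'.exists_max_image (fun z => z.1) ⟨m, hmT'⟩
  obtain ⟨hxT, hxsum⟩ := Finset.mem_filter.mp hxT'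
  refine ⟨x, hxT, fun z hz => ⟨?_, fun hzs => ?_⟩⟩
  · rw [hxsum]; exact hm z hz
  · exact hx z (Finset.mem_filter.mpr ⟨hz, by omega⟩)

lemma corner_filter {T : Finset (ℤ × ℤ)} {x : ℤ × ℤ}
    (hmax : ∀ z ∈ T, z.1 + z.2 ≤ x.1 + x.2 ∧ (z.1 + z.2 = x.1 + x.2 → z.1 ≤ x.1)) :
    (hexDirs.filter (fun d => x + d ∈ T)).card ≤ 3 := by
  have hsub : hexDirs.filter (fun d => x + d ∈ T) ⊆ ({(-1,0),(0,-1),(-1,1)} : Finset (ℤ × ℤ)) := by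
    intro d hd
    rw [Finset.mem_filter] at hd
    obtain ⟨hd1, hd2⟩ := hd
    have h := hmax _ hd2
    simp only [Prod.fst_add, Prod.snd_add] at h
    rw [hex_mem_iff] at hd1
    simp only [Finset.mem_insert, Finset.mem_singleton]
    rcases hd1 with h1|h1|h1|h1|h1|h1 <;> subst h1 <;> simp_all <;> omega
  calc (hexDirs.filter (fun d => x + d ∈ T)).card
      ≤ ({(-1,0),(0,-1),(-1,1)} : Finset (ℤ × ℤ)).card := Finset.card_le_card hsub
    _ ≤ 3 := by decide

/-- If `S` contains an adjacent pair, there is a cell outside `S` with at least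
two neighbors inside `S`. -/
lemma caseA {S : Finset (ℤ × ℤ)} (hA : ∃ z ∈ S, ∃ d ∈ hexDirs, z + d ∈ S) :
    ∃ y ∉ S, 2 ≤ (hexDirs.filter (fun d => y + d ∈ S)).card := by
  classical
  set P := S.filter (fun z => ∃ d ∈ hexDirs, z + d ∈ S) with hP
  have hPne : P.Nonempty := by
    obtain ⟨z, hz, hd⟩ := hA
    exact ⟨z, Finset.mem_filter.mpr ⟨hz, hd⟩⟩
  obtain ⟨x, hxP, hmax⟩ := exists_corner hPne
  obtain ⟨hxS, dx, hdx, hdxS⟩ := Finset.mem_filter.mp hxP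
  -- helper: any member of S with a neighbor in S obeys the corner bounds
  have hkey : ∀ w ∈ S, (∃ d ∈ hexDirs, w + d ∈ S) →
      w.1 + w.2 ≤ x.1 + x.2 ∧ (w.1 + w.2 = x.1 + x.2 → w.1 ≤ x.1) := by
    intro w hw hwd
    exact hmax w (Finset.mem_filter.mpr ⟨hw, hwd⟩)
  have two_le : ∀ (y : ℤ × ℤ) (d₁ d₂ : ℤ × ℤ), d₁ ∈ hexDirs → d₂ ∈ hexDirs → d₁ ≠ d₂ →
      y + d₁ ∈ S → y + d₂ ∈ S → 2 ≤ (hexDirs.filter (fun d => y + d ∈ S)).card := by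
    intro y d₁ d₂ h1 h2 hne hm1 hm2
    have hsub : ({d₁, d₂} : Finset (ℤ × ℤ)) ⊆ hexDirs.filter (fun d => y + d ∈ S) := by
      intro d hd
      simp only [Finset.mem_insert, Finset.mem_singleton] at hd
      rcases hd with rfl | rfl <;> exact Finset.mem_filter.mpr ⟨by assumption, by assumption⟩
    calc (2 : ℕ) = ({d₁, d₂} : Finset (ℤ × ℤ)).card := (Finset.card_pair hne).symm
      _ ≤ _ := Finset.card_le_card hsub
  by_cases h1 : x + (0,-1) ∈ S
  · -- y = x + (1,-1)
    refine ⟨x + (1,-1), ?_, ?_⟩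
    · intro hyS
      have hb := hkey (x + (1,-1)) hyS ⟨(-1,1), by decide, by
        have : x + (1,-1) + (-1,1) = x := by rw [padd]; norm_num
        rw [this]; exact hxS⟩
      simp only [Prod.fst_add, Prod.snd_add] at hb
      omega
    · refine two_le _ (-1,1) (-1,0) (by decide) (by decide) (by decide) ?_ ?_
      · have : x + (1,-1) + (-1,1) = x := by rw [padd]; norm_num
        rw [this]; exact hxS
      · have : x + (1,-1) + (-1,0) = x + (0,-1) := by rw [padd]; norm_num
        rw [this]; exact h1
  · by_cases h2 : x + (-1,1) ∈ S
    · -- y = x + (0,1)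
      refine ⟨x + (0,1), ?_, ?_⟩
      · intro hyS
        have hb := hkey (x + (0,1)) hyS ⟨(0,-1), by decide, by
          have : x + (0,1) + (0,-1) = x := by rw [padd]; norm_num
          rw [this]; exact hxS⟩
        simp only [Prod.fst_add, Prod.snd_add] at hb
        omega
      · refine two_le _ (0,-1) (-1,0) (by decide) (by decide) (by decide) ?_ ?_
        · have : x + (0,1) + (0,-1) = x := by rw [padd]; norm_num
          rw [this]; exact hxS
        · have : x + (0,1) + (-1,0) = x + (-1,1) := by rw [padd]; norm_num
          rw [this]; exact h2
    · -- the neighbor of x in S must be x + (-1,0)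
      have h3 : x + (-1,0) ∈ S := by
        rw [hex_mem_iff] at hdx
        rcases hdx with h|h|h|h|h|h <;> subst h
        · exfalso
          have hb := hkey (x + (1,0)) hdxS ⟨(-1,0), by decide, by
            have : x + (1,0) + (-1,0) = x := by rw [padd]; norm_num
            rw [this]; exact hxS⟩
          simp only [Prod.fst_add, Prod.snd_add] at hb
          omega
        · exact hdxS
        · exfalso
          have hb := hkey (x + (0,1)) hdxS ⟨(0,-1), by decide, by
            have : x + (0,1) + (0,-1) = x := by rw [padd]; norm_num
            rw [this]; exact hxS⟩
          simp only [Prod.fst_add, Prod.snd_add] at hb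
          omega
        · exact absurd hdxS h1
        · exfalso
          have hb := hkey (x + (1,-1)) hdxS ⟨(-1,1), by decide, by
            have : x + (1,-1) + (-1,1) = x := by rw [padd]; norm_num
            rw [this]; exact hxS⟩
          simp only [Prod.fst_add, Prod.snd_add] at hb
          omega
        · exact absurd hdxS h2
      refine ⟨x + (0,-1), h1, ?_⟩
      refine two_le _ (0,1) (-1,1) (by decide) (by decide) (by decide) ?_ ?_
      · have : x + (0,-1) + (0,1) = x := by rw [padd]; norm_num
        rw [this]; exact hxS
      · have : x + (0,-1) + (-1,1) = x + (-1,0) := by rw [padd]; norm_num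
        rw [this]; exact h3

/-- A horizontal segment of `m` cells. -/
def seg (m : ℕ) : Finset (ℤ × ℤ) := (Finset.range m).image (fun i : ℕ => ((i : ℤ), 0))

lemma mem_seg {m : ℕ} {p : ℤ × ℤ} : p ∈ seg m ↔ 0 ≤ p.1 ∧ p.1 < m ∧ p.2 = 0 := by
  simp only [seg, Finset.mem_image, Finset.mem_range]
  constructor
  · rintro ⟨i, hi, rfl⟩
    refine ⟨Int.natCast_nonneg i, by show (i : ℤ) < (m : ℤ); exact_mod_cast hi, rfl⟩
  · rintro ⟨h0, hm, h2⟩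
    refine ⟨p.1.toNat, by omega, ?_⟩
    exact Prod.ext (Int.toNat_of_nonneg h0) h2.symm

lemma seg_card (m : ℕ) : (seg m).card = m := by
  rw [seg, Finset.card_image_of_injective _ (fun a b h => by simpa using h), Finset.card_range]

lemma seg_two : seg 2 = insert ((1 : ℤ), (0 : ℤ)) {((0 : ℤ), (0 : ℤ))} := by
  ext p
  rw [mem_seg]
  simp only [Finset.mem_insert, Finset.mem_singleton, Prod.ext_iff]
  constructor
  · rintro ⟨h0, hm, h2⟩
    norm_num at hm
    rcases (by omega : p.1 = 1 ∨ p.1 = 0) with h | h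
    · exact Or.inl ⟨h, h2⟩
    · exact Or.inr ⟨h, h2⟩
  · rintro (⟨h1, h2⟩ | ⟨h1, h2⟩) <;> rw [h1, h2] <;> norm_num

lemma seg_per {m : ℕ} (hm : 2 ≤ m) : extPer (seg m) ≤ 4 * m + 2 := by
  induction m, hm using Nat.le_induction with
  | base =>
    have hnot : ((1 : ℤ), (0 : ℤ)) ∉ ({((0 : ℤ), (0 : ℤ))} : Finset (ℤ × ℤ)) := by decide
    have h := per_insert ({((0 : ℤ), (0 : ℤ))} : Finset (ℤ × ℤ)) hnot
    rw [per_single] at h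
    have hk : 1 ≤ (hexDirs.filter
        (fun d => ((1 : ℤ), (0 : ℤ)) + d ∈ ({((0 : ℤ), (0 : ℤ))} : Finset (ℤ × ℤ)))).card := by
      rw [Nat.one_le_iff_ne_zero, ← Nat.pos_iff_ne_zero, Finset.card_pos]
      exact ⟨(-1, 0), by decide⟩
    rw [seg_two]
    omega
  | succ m hm ih =>
    have hins : seg (m + 1) = insert ((m : ℤ), 0) (seg m) := by
      ext p
      rw [Finset.mem_insert, mem_seg, mem_seg]
      constructor
      · rintro ⟨h0, hlt, h2⟩
        by_cases hp : p.1 = (m : ℤ)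
        · exact Or.inl (Prod.ext hp h2)
        · exact Or.inr ⟨h0, by push_cast at hlt ⊢; omega, h2⟩
      · rintro (rfl | ⟨h0, hlt, h2⟩)
        · exact ⟨Int.natCast_nonneg _, by push_cast; omega, rfl⟩
        · exact ⟨h0, by push_cast at hlt ⊢; omega, h2⟩
    have hnm : ((m : ℤ), (0 : ℤ)) ∉ seg m := by
      rw [mem_seg]
      simp
    have hmem : ((m : ℤ), (0 : ℤ)) + (-1, 0) ∈ seg m := by
      have he : ((m : ℤ), (0 : ℤ)) + (-1, 0) = ((m : ℤ) - 1, 0) := by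
        rw [Prod.mk_add_mk]; exact Prod.ext (by ring) (by ring)
      rw [he, mem_seg]
      refine ⟨by push_cast; omega, by push_cast; omega, rfl⟩
    have hk : 1 ≤ (hexDirs.filter (fun d => ((m : ℤ), (0 : ℤ)) + d ∈ seg m)).card := by
      rw [Nat.one_le_iff_ne_zero, ← Nat.pos_iff_ne_zero, Finset.card_pos]
      exact ⟨(-1, 0), Finset.mem_filter.mpr ⟨by decide, hmem⟩⟩
    have h := per_insert (seg m) hnm
    rw [← hins] at h
    omega

theorem stmt1 (n : ℕ) (hn : 2 ≤ n) :
    tmin n ≤ tmin (n + 1) ∧ tmin (n + 1) ≤ tmin n + 2 := by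
  classical
  constructor
  · obtain ⟨T, hTcard, hTper⟩ := tmin_spec (n + 1)
    have hne : T.Nonempty := Finset.card_pos.mp (by omega)
    obtain ⟨x, hxT, hmax⟩ := exists_corner hne
    have h1 := per_erase T hxT
    have h2 := corner_filter hmax
    have h3 : tmin n ≤ extPer (T.erase x) :=
      tmin_le _ (by rw [Finset.card_erase_of_mem hxT, hTcard]; omega)
    omega
  · obtain ⟨S, hScard, hSper⟩ := tmin_spec n
    by_cases hA : ∃ z ∈ S, ∃ d ∈ hexDirs, z + d ∈ S
    · obtain ⟨y, hyS, hk⟩ := caseA hA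
      have h := per_insert S hyS
      have h2 : tmin (n + 1) ≤ extPer (insert y S) :=
        tmin_le _ (by rw [Finset.card_insert_of_notMem hyS, hScard])
      omega
    · -- no adjacent pair: extPer S = 6n
      have hper : extPer S = 6 * n := by
        push_neg at hA
        have : ∀ z ∈ S, (hexDirs.filter (fun d => z + d ∉ S)).card = 6 := by
          intro z hz
          rw [Finset.filter_true_of_mem (fun d hd => hA z hz d hd), hex_card]
        rw [extPer, Finset.sum_congr rfl this, Finset.sum_const, hScard, smul_eq_mul]
        ring
      have h1 : tmin (n + 1) ≤ extPer (seg (n + 1)) := tmin_le _ (seg_card (n + 1))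
      have h2 := seg_per (m := n + 1) (by omega)
      omega
end

section
/- Let v₀, v₁, …, v_m = v₀ be a closed polygon in ℝ² such that every edge vᵢ − vᵢ₋₁ is a nonnegative multiple of (cos(kᵢπ/3), sin(kᵢπ/3)) for some integer kᵢ (i.e., all edges use only the six directions θ = kπ/3). Let L = Σᵢ ‖vᵢ − vᵢ₋₁‖ be its total length and A = (1/2)·Σᵢ (vᵢ₋₁ × vᵢ) its shoelace signed area, where (a,b) × (c,d) = ad − bc. Then L² ≥ 8√3·|A|; this is the value achieved by the regular hexagon, i.e., among polygons using only the directions kπ/3, none encloses a given area with shorter perimeter than the regular hexagon. -/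
/-- Euclidean length of a vector in `ℝ × ℝ`. -/
noncomputable def elen (w : ℝ × ℝ) : ℝ := Real.sqrt (w.1 ^ 2 + w.2 ^ 2)

/-- Planar cross product `(a,b) × (c,d) = a d − b c`. -/
def cross (w z : ℝ × ℝ) : ℝ := w.1 * z.2 - w.2 * z.1

open Finset

/-- prefix sums over `Ioc 0 j` -/
noncomputable def pre (f : ℕ → ℝ) (j : ℕ) : ℝ := ∑ r ∈ Finset.Ioc 0 j, f r

lemma telescope_Ioc (F : ℕ → ℝ) {i n : ℕ} (h : i ≤ n) :
    ∑ j ∈ Finset.Ioc i n, (F j - F (j - 1)) = F n - F i := by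
  induction n, h using Nat.le_induction with
  | base => simp
  | succ n hn ih =>
    rw [Finset.sum_Ioc_succ_top (by omega), ih]
    simp only [Nat.add_sub_cancel]
    ring

lemma pre_succ (f : ℕ → ℝ) (j : ℕ) : pre f (j + 1) = pre f j + f (j + 1) := by
  simp [pre, Finset.sum_Ioc_succ_top (Nat.zero_le _)]

lemma pre_zero (f : ℕ → ℝ) : pre f 0 = 0 := by simp [pre]

lemma pre_diff (f : ℕ → ℝ) {i j : ℕ} (h : i ≤ j) :
    pre f j - pre f i = ∑ r ∈ Finset.Ioc i j, f r := by
  have := Finset.sum_Ioc_consecutive f (Nat.zero_le i) h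
  simp only [pre]
  linarith [this]

lemma pre_mono {f : ℕ → ℝ} {n : ℕ} (hf : ∀ r ∈ Finset.Ioc 0 n, 0 ≤ f r)
    {i j : ℕ} (hij : i ≤ j) (hjn : j ≤ n) : pre f i ≤ pre f j := by
  have h := pre_diff f hij
  have h0 : 0 ≤ ∑ r ∈ Finset.Ioc i j, f r := by
    apply Finset.sum_nonneg
    intro r hr
    obtain ⟨h1, h2⟩ := Finset.mem_Ioc.mp hr
    exact hf r (Finset.mem_Ioc.mpr ⟨by omega, by omega⟩)
  linarith

/-- 1D spread lemma -/
lemma spread (s : Finset ℕ) (c v : ℕ → ℝ) (R : ℝ) (hR : 0 ≤ R)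
    (hc : ∀ i ∈ s, 0 ≤ c i) (hv : ∀ i ∈ s, ∀ j ∈ s, |v i - v j| ≤ R) :
    ∑ i ∈ s, ∑ j ∈ s, c i * c j * |v i - v j| ≤ (∑ i ∈ s, c i) ^ 2 * R / 2 := by
  rcases s.eq_empty_or_nonempty with rfl | hs
  · simp
  rcases eq_or_lt_of_le hR with hR0 | hR0
  · -- R = 0 : every |v i - v j| = 0
    have key : ∀ i ∈ s, ∀ j ∈ s, c i * c j * |v i - v j| ≤ 0 := by
      intro i hi j hj
      have h1 := hv i hi j hj
      rw [← hR0] at h1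
      have h2 : |v i - v j| = 0 := le_antisymm h1 (abs_nonneg _)
      rw [h2]; simp
    calc ∑ i ∈ s, ∑ j ∈ s, c i * c j * |v i - v j|
        ≤ ∑ i ∈ s, (0:ℝ) := by
          apply Finset.sum_le_sum
          intro i hi
          exact Finset.sum_nonpos (fun j hj => key i hi j hj)
      _ = 0 := by simp
      _ ≤ _ := by positivity
  -- R > 0
  obtain ⟨i₀, hi₀, hmin⟩ := s.exists_min_image v hs
  set w : ℕ → ℝ := fun i => v i - v i₀ with hw
  have hw0 : ∀ i ∈ s, 0 ≤ w i := fun i hi => by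
    simp only [hw]; linarith [hmin i hi]
  have hwR : ∀ i ∈ s, w i ≤ R := fun i hi => by
    have h := hv i hi i₀ hi₀
    have h0 := hw0 i hi
    simp only [hw] at *
    rw [abs_of_nonneg h0] at h
    exact h
  have key : ∀ i ∈ s, ∀ j ∈ s,
      c i * c j * |v i - v j| ≤ c i * c j * (w i + w j - 2 * w i * w j / R) := by
    intro i hi j hj
    have hvw : |v i - v j| = |w i - w j| := by simp only [hw]; ring_nf
    apply mul_le_mul_of_nonneg_left _ (mul_nonneg (hc i hi) (hc j hj))
    rw [hvw]
    have hdiv1 : 2 * w i * w j / R ≤ 2 * w j := by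
      rw [div_le_iff₀ hR0]
      nlinarith [hw0 j hj, hwR i hi]
    have hdiv2 : 2 * w i * w j / R ≤ 2 * w i := by
      rw [div_le_iff₀ hR0]
      nlinarith [hw0 i hi, hwR j hj]
    rcases abs_cases (w i - w j) with ⟨h1, _⟩ | ⟨h1, _⟩ <;> rw [h1] <;> linarith
  set M := ∑ i ∈ s, c i with hM
  set u := ∑ i ∈ s, c i * w i with hu
  have hMnn : 0 ≤ M := Finset.sum_nonneg hc
  have hunn : 0 ≤ u := Finset.sum_nonneg (fun i hi => mul_nonneg (hc i hi) (hw0 i hi))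
  have expand : ∑ i ∈ s, ∑ j ∈ s, c i * c j * (w i + w j - 2 * w i * w j / R)
      = 2 * M * u - 2 / R * u ^ 2 := by
    have inner : ∀ i ∈ s, ∑ j ∈ s, c i * c j * (w i + w j - 2 * w i * w j / R)
        = c i * w i * M + c i * u - 2 / R * (c i * w i) * u := by
      intro i _
      have e1 : ∑ j ∈ s, c i * c j * w i = c i * w i * M := by
        rw [hM, Finset.mul_sum]
        exact Finset.sum_congr rfl (fun j _ => by ring)
      have e2 : ∑ j ∈ s, c i * c j * w j = c i * u := by
        rw [hu, Finset.mul_sum]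
        exact Finset.sum_congr rfl (fun j _ => by ring)
      have e3 : ∑ j ∈ s, c i * c j * (2 * w i * w j / R) = 2 / R * (c i * w i) * u := by
        rw [hu, Finset.mul_sum]
        exact Finset.sum_congr rfl (fun j _ => by field_simp)
      calc ∑ j ∈ s, c i * c j * (w i + w j - 2 * w i * w j / R)
          = ∑ j ∈ s, (c i * c j * w i + c i * c j * w j - c i * c j * (2 * w i * w j / R)) :=
            Finset.sum_congr rfl (fun j _ => by ring)
        _ = _ := by rw [Finset.sum_sub_distrib, Finset.sum_add_distrib, e1, e2, e3]
    calc ∑ i ∈ s, ∑ j ∈ s, c i * c j * (w i + w j - 2 * w i * w j / R)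
        = ∑ i ∈ s, (c i * w i * M + c i * u - 2 / R * (c i * w i) * u) :=
          Finset.sum_congr rfl inner
      _ = 2 * M * u - 2 / R * u ^ 2 := by
          rw [Finset.sum_sub_distrib, Finset.sum_add_distrib, ← Finset.sum_mul,
            ← Finset.sum_mul]
          have : ∑ i ∈ s, 2 / R * (c i * w i) * u = 2 / R * u * u := by
            rw [← Finset.sum_mul, ← Finset.mul_sum, ← hu]
          rw [this, ← hu, ← hM]
          ring
  have final : 2 * M * u - 2 / R * u ^ 2 ≤ M ^ 2 * R / 2 := by
    have hRR : 2 / R * u ^ 2 * R = 2 * u ^ 2 := by field_simp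
    nlinarith [sq_nonneg (M * R - 2 * u), hR0, hRR]
  calc ∑ i ∈ s, ∑ j ∈ s, c i * c j * |v i - v j|
      ≤ ∑ i ∈ s, ∑ j ∈ s, c i * c j * (w i + w j - 2 * w i * w j / R) := by
        apply Finset.sum_le_sum; intro i hi
        apply Finset.sum_le_sum; intro j hj
        exact key i hi j hj
    _ = 2 * M * u - 2 / R * u ^ 2 := expand
    _ ≤ M ^ 2 * R / 2 := final

noncomputable def GG (l t : ℝ) : ℝ := if t ≤ l / 2 then t ^ 2 / 2 else l * t - t ^ 2 / 2 - l ^ 2 / 4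

lemma GG_zero (l : ℝ) (hl : 0 ≤ l) : GG l 0 = 0 := by
  rw [GG, if_pos (by linarith)]; norm_num

lemma GG_top (l : ℝ) (hl : 0 ≤ l) : GG l l = l ^ 2 / 4 := by
  rcases eq_or_lt_of_le hl with h | h
  · rw [GG, if_pos (by linarith)]; nlinarith
  · rw [GG, if_neg (by linarith)]; ring

lemma trapz (l a b : ℝ) (h0 : 0 ≤ a) (hab : a ≤ b) (hb : b ≤ l) :
    (b - a) * (min a (l - a) + min b (l - b)) / 2 ≤ GG l b - GG l a := by
  rcases le_or_gt a (l/2) with ha2 | ha2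
  · rcases le_or_gt b (l/2) with hb2 | hb2
    · rw [GG, GG, if_pos ha2, if_pos hb2, min_eq_left (by linarith), min_eq_left (by linarith)]
      nlinarith
    · rw [GG, GG, if_pos ha2, if_neg (by linarith), min_eq_left (by linarith),
        min_eq_right (by linarith)]
      nlinarith [mul_nonneg (by linarith : (0:ℝ) ≤ l - 2*a) (by linarith : (0:ℝ) ≤ 2*b - l)]
  · rw [GG, GG, if_neg (by linarith), if_neg (by linarith), min_eq_right (by linarith),
      min_eq_right (by linarith)]
    nlinarith

section chords
variable {n : ℕ} {f κ : ℕ → ℝ}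

lemma chord_fwd (hκ : ∀ r ∈
    Finset.Ioc 0 n, 0 ≤ κ r) (hf : ∀ r ∈ Finset.Ioc 0 n, |f r| ≤ κ r)
    {i j : ℕ} (hij : i ≤ j) (hjn : j ≤ n) :
    |pre f j - pre f i| ≤ pre κ j - pre κ i := by
  rw [pre_diff f hij, pre_diff κ hij]
  refine le_trans (Finset.abs_sum_le_sum_abs _ _) (Finset.sum_le_sum ?_)
  intro r hr
  obtain ⟨h1, h2⟩ := Finset.mem_Ioc.mp hr
  exact hf r (Finset.mem_Ioc.mpr ⟨by omega, by omega⟩)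

lemma chord_bwd (hκ : ∀ r ∈ Finset.Ioc 0 n, 0 ≤ κ r)
    (hf : ∀ r ∈ Finset.Ioc 0 n, |f r| ≤ κ r)
    (hsum : ∑ r ∈ Finset.Ioc 0 n, f r = 0)
    {i j : ℕ} (hij : i ≤ j) (hjn : j ≤ n) :
    |pre f j - pre f i| ≤ pre κ n - (pre κ j - pre κ i) := by
  have e1 : pre f j - pre f i = ∑ r ∈ Finset.Ioc i j, f r := pre_diff f hij
  have e2 : (∑ r ∈ Finset.Ioc 0 i, f r) + ∑ r ∈ Finset.Ioc i j, f r
      = ∑ r ∈ Finset.Ioc 0 j, f r := Finset.sum_Ioc_consecutive f (Nat.zero_le i) hij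
  have e3 : (∑ r ∈ Finset.Ioc 0 j, f r) + ∑ r ∈ Finset.Ioc j n, f r
      = ∑ r ∈ Finset.Ioc 0 n, f r := Finset.sum_Ioc_consecutive f (Nat.zero_le j) hjn
  have e4 : pre f j - pre f i
      = -((∑ r ∈ Finset.Ioc 0 i, f r) + ∑ r ∈ Finset.Ioc j n, f r) := by
    rw [e1]; rw [hsum] at e3; linarith
  rw [e4, abs_neg]
  have h5 : |(∑ r ∈ Finset.Ioc 0 i, f r) + ∑ r ∈ Finset.Ioc j n, f r|
      ≤ (∑ r ∈ Finset.Ioc 0 i, κ r) + ∑ r ∈ Finset.Ioc j n, κ r := by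
    refine le_trans (abs_add_le _ _) ?_
    gcongr
    · refine le_trans (Finset.abs_sum_le_sum_abs _ _) (Finset.sum_le_sum ?_)
      intro r hr
      obtain ⟨h1, h2⟩ := Finset.mem_Ioc.mp hr
      exact hf r (Finset.mem_Ioc.mpr ⟨by omega, by omega⟩)
    · refine le_trans (Finset.abs_sum_le_sum_abs _ _) (Finset.sum_le_sum ?_)
      intro r hr
      obtain ⟨h1, h2⟩ := Finset.mem_Ioc.mp hr
      exact hf r (Finset.mem_Ioc.mpr ⟨by omega, by omega⟩)
  have e6 : (∑ r ∈ Finset.Ioc 0 i, κ r) = pre κ i := rfl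
  have e7 : ∑ r ∈ Finset.Ioc j n, κ r = pre κ n - pre κ j := (pre_diff κ hjn).symm
  rw [e6, e7] at h5
  linarith
end chords

lemma pre_nonneg {κ : ℕ → ℝ} {n : ℕ} (hκ : ∀ r ∈ Finset.Ioc 0 n, 0 ≤ κ r)
    {j : ℕ} (hj : j ≤ n) : 0 ≤ pre κ j := by
  have : pre κ 0 ≤ pre κ j := pre_mono hκ (Nat.zero_le j) hj
  simpa [pre] using this

/-- The cross bound: total censored-weighted deviation of midpoint values from a
vertex value is at most `ℓ²/4`. -/
lemma crossbound {n : ℕ} {f κ : ℕ → ℝ} (hκ : ∀ r ∈ Finset.Ioc 0 n, 0 ≤ κ r)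
    (hf : ∀ r ∈ Finset.Ioc 0 n, |f r| ≤ κ r)
    (hsum : ∑ r ∈ Finset.Ioc 0 n, f r = 0)
    {i : ℕ} (hi : i ≤ n) :
    ∑ j ∈ Finset.Ioc 0 n, κ j * |(pre f (j - 1) + pre f j) / 2 - pre f i|
      ≤ (pre κ n) ^ 2 / 4 := by
  set l := pre κ n with hl
  have hl0 : 0 ≤ l := pre_nonneg hκ le_rfl
  -- generic per-j bound
  have keybound : ∀ j, 0 < j → j ≤ n → ∀ a b : ℝ,
      a = pre κ (j-1) - pre κ i ∨ a = pre κ (j-1) + l - pre κ i →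
      b - a = κ j →
      0 ≤ a → b ≤ l →
      |pre f (j-1) - pre f i| ≤ min a (l - a) →
      |pre f j - pre f i| ≤ min b (l - b) →
      κ j * |(pre f (j - 1) + pre f j) / 2 - pre f i| ≤ GG l b - GG l a := by
    intro j hj0 hjn a b _ hba ha0 hbl c1 c2
    have hκj : 0 ≤ κ j := hκ j (Finset.mem_Ioc.mpr ⟨hj0, hjn⟩)
    have hab : a ≤ b := by linarith
    have habs : |(pre f (j - 1) + pre f j) / 2 - pre f i|
        ≤ (min a (l - a) + min b (l - b)) / 2 := by
      have : (pre f (j - 1) + pre f j) / 2 - pre f i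
          = ((pre f (j-1) - pre f i) + (pre f j - pre f i)) / 2 := by ring
      rw [this]
      rw [abs_div]
      rw [abs_of_nonneg (by norm_num : (0:ℝ) ≤ 2)]
      have := abs_add_le (pre f (j-1) - pre f i) (pre f j - pre f i)
      have h2 := add_le_add c1 c2
      linarith
    calc κ j * |(pre f (j - 1) + pre f j) / 2 - pre f i|
        ≤ κ j * ((min a (l - a) + min b (l - b)) / 2) := by
          exact mul_le_mul_of_nonneg_left habs hκj
      _ = (b - a) * (min a (l - a) + min b (l - b)) / 2 := by rw [hba]; ring
      _ ≤ GG l b - GG l a := trapz l a b ha0 hab hbl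
  -- split the sum at i
  have hsplit : (∑ j ∈ Finset.Ioc 0 i, κ j * |(pre f (j - 1) + pre f j) / 2 - pre f i|)
      + ∑ j ∈ Finset.Ioc i n, κ j * |(pre f (j - 1) + pre f j) / 2 - pre f i|
      = ∑ j ∈ Finset.Ioc 0 n, κ j * |(pre f (j - 1) + pre f j) / 2 - pre f i| :=
    Finset.sum_Ioc_consecutive _ (Nat.zero_le i) hi
  -- high part
  have high : ∑ j ∈ Finset.Ioc i n, κ j * |(pre f (j - 1) + pre f j) / 2 - pre f i|
      ≤ GG l (l - pre κ i) - GG l 0 := by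
    have step : ∀ j ∈ Finset.Ioc i n,
        κ j * |(pre f (j - 1) + pre f j) / 2 - pre f i|
        ≤ (fun j => GG l (pre κ j - pre κ i)) j - (fun j => GG l (pre κ j - pre κ i)) (j-1) := by
      intro j hj
      obtain ⟨hj1, hj2⟩ := Finset.mem_Ioc.mp hj
      have hj0 : 0 < j := by omega
      have hj1' : i ≤ j - 1 := by omega
      have hj1n : j - 1 ≤ n := by omega
      have hin : i ≤ n := hi
      simp only
      apply keybound j hj0 hj2 _ _ (Or.inl rfl)
      · have : pre κ j = pre κ (j-1) + κ j := by
          have e := pre_diff κ (show j - 1 ≤ j by omega)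
          have : Finset.Ioc (j-1) j = {j} := by
            ext r; simp [Finset.mem_Ioc]; omega
          rw [this] at e; simp at e; linarith
        linarith
      · have := pre_mono hκ hj1' hj1n; linarith
      · have := pre_mono hκ hj2 le_rfl
        have h0 := pre_nonneg hκ (show i ≤ n from hi)
        linarith
      · exact le_min (chord_fwd hκ hf hj1' hj1n)
          (by have := chord_bwd hκ hf hsum hj1' hj1n; linarith)
      · exact le_min (chord_fwd hκ hf (show i ≤ j by omega) hj2)
          (by have := chord_bwd hκ hf hsum (show i ≤ j by omega) hj2; linarith)
    calc ∑ j ∈ Finset.Ioc i n, κ j * |(pre f (j - 1) + pre f j) / 2 - pre f i|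
        ≤ ∑ j ∈ Finset.Ioc i n,
            ((fun j => GG l (pre κ j - pre κ i)) j - (fun j => GG l (pre κ j - pre κ i)) (j-1)) :=
          Finset.sum_le_sum step
      _ = GG l (pre κ n - pre κ i) - GG l (pre κ i - pre κ i) := by
          rw [telescope_Ioc _ hi]
      _ = GG l (l - pre κ i) - GG l 0 := by rw [← hl]; congr 1; · congr 1; ring
  -- low part
  have low : ∑ j ∈ Finset.Ioc 0 i, κ j * |(pre f (j - 1) + pre f j) / 2 - pre f i|
      ≤ GG l l - GG l (l - pre κ i) := by
    have step : ∀ j ∈ Finset.Ioc 0 i,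
        κ j * |(pre f (j - 1) + pre f j) / 2 - pre f i|
        ≤ (fun j => GG l (pre κ j + l - pre κ i)) j
          - (fun j => GG l (pre κ j + l - pre κ i)) (j-1) := by
      intro j hj
      obtain ⟨hj1, hj2⟩ := Finset.mem_Ioc.mp hj
      have hj0 : 0 < j := hj1
      have hjn : j ≤ n := le_trans hj2 hi
      have hj1i : j - 1 ≤ i := by omega
      simp only
      apply keybound j hj0 hjn _ _ (Or.inr rfl)
      · have : pre κ j = pre κ (j-1) + κ j := by
          have e := pre_diff κ (show j - 1 ≤ j by omega)
          have erw : Finset.Ioc (j-1) j = {j} := by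
            ext r; simp [Finset.mem_Ioc]; omega
          rw [erw] at e; simp at e; linarith
        linarith
      · have h1 : pre κ i ≤ pre κ n := pre_mono hκ hi le_rfl
        have h2 : 0 ≤ pre κ (j-1) := pre_nonneg hκ (by omega)
        linarith
      · have := pre_mono hκ hj2 hi; linarith
      · -- |pre f (j-1) - pre f i| ≤ min a (l - a) with a = pre κ (j-1) + l - pre κ i
        rw [abs_sub_comm]
        refine le_min ?_ ?_
        · have := chord_bwd hκ hf hsum hj1i hi; linarith
        · have := chord_fwd hκ hf hj1i hi; linarith
      · rw [abs_sub_comm]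
        refine le_min ?_ ?_
        · have := chord_bwd hκ hf hsum hj2 hi; linarith
        · have := chord_fwd hκ hf hj2 hi; linarith
    calc ∑ j ∈ Finset.Ioc 0 i, κ j * |(pre f (j - 1) + pre f j) / 2 - pre f i|
        ≤ ∑ j ∈ Finset.Ioc 0 i,
            ((fun j => GG l (pre κ j + l - pre κ i)) j
              - (fun j => GG l (pre κ j + l - pre κ i)) (j-1)) :=
          Finset.sum_le_sum step
      _ = GG l (pre κ i + l - pre κ i) - GG l (pre κ 0 + l - pre κ i) := by
          rw [telescope_Ioc _ (Nat.zero_le i)]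
      _ = GG l l - GG l (l - pre κ i) := by
          have : pre κ 0 = 0 := by simp [pre]
          rw [this]; congr 1 <;> congr 1 <;> ring
  have := GG_zero l hl0
  have := GG_top l hl0
  linarith

lemma pre_step (f : ℕ → ℝ) {j : ℕ} (hj : 0 < j) : pre f j = pre f (j - 1) + f j := by
  have e := pre_diff f (show j - 1 ≤ j by omega)
  have erw : Finset.Ioc (j-1) j = {j} := by
    ext r; simp [Finset.mem_Ioc]; omega
  rw [erw] at e; simp at e; linarith

/-- core per-direction estimate -/
lemma core {n : ℕ} (f κ cw : ℕ → ℝ)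
    (hκ : ∀ r ∈ Finset.Ioc 0 n, 0 ≤ κ r) (hcw : ∀ r ∈ Finset.Ioc 0 n, 0 ≤ cw r)
    (hf : ∀ r ∈ Finset.Ioc 0 n, |f r| ≤ κ r)
    (hfc : ∀ r ∈ Finset.Ioc 0 n, κ r ≠ 0 → κ r = cw r)
    (hsum : ∑ r ∈ Finset.Ioc 0 n, f r = 0) :
    ∑ i ∈ (Finset.Ioc 0 n).filter (fun i => κ i = 0), ∑ j ∈ Finset.Ioc 0 n,
      cw i * cw j * |(pre f (i-1) + pre f i)/2 - (pre f (j-1) + pre f j)/2|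
    ≤ (∑ i ∈ (Finset.Ioc 0 n).filter (fun i => κ i = 0), cw i) * (pre κ n)^2 / 4
      + (∑ i ∈ (Finset.Ioc 0 n).filter (fun i => κ i = 0), cw i)^2 * pre κ n / 4 := by
  classical
  set t := (Finset.Ioc 0 n).filter (fun i => κ i = 0) with ht
  set l := pre κ n with hl
  have hl0 : 0 ≤ l := pre_nonneg hκ le_rfl
  -- midpoint value equals vertex value on atoms
  have midatom : ∀ i ∈ t, (pre f (i-1) + pre f i)/2 = pre f i := by
    intro i hi
    obtain ⟨hmem, hκi⟩ := Finset.mem_filter.mp hi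
    obtain ⟨hi0, hin⟩ := Finset.mem_Ioc.mp hmem
    have hfi : f i = 0 := by
      have h1 := hf i hmem
      have : |f i| ≤ 0 := by rw [hκi] at h1; exact h1
      exact abs_eq_zero.mp (le_antisymm this (abs_nonneg _))
    have := pre_step f hi0
    rw [this, hfi]; ring
  -- range bound for atom values
  have hrange : ∀ i ∈ t, ∀ j ∈ t, |pre f i - pre f j| ≤ l / 2 := by
    intro i hi j hj
    obtain ⟨hmi, _⟩ := Finset.mem_filter.mp hi
    obtain ⟨hmj, _⟩ := Finset.mem_filter.mp hj
    obtain ⟨hi0, hin⟩ := Finset.mem_Ioc.mp hmi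
    obtain ⟨hj0, hjn⟩ := Finset.mem_Ioc.mp hmj
    rcases le_total j i with hij | hij
    · have h1 := chord_fwd hκ hf hij hin
      have h2 := chord_bwd hκ hf hsum hij hin
      linarith
    · have h1 := chord_fwd hκ hf hij hjn
      have h2 := chord_bwd hκ hf hsum hij hjn
      rw [abs_sub_comm]
      linarith
  -- split inner sums
  have inner : ∀ i ∈ t,
      ∑ j ∈ Finset.Ioc 0 n, cw i * cw j * |(pre f (i-1) + pre f i)/2 - (pre f (j-1) + pre f j)/2|
      ≤ (∑ j ∈ t, cw i * cw j * |pre f i - pre f j|) + cw i * (l^2/4) := by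
    intro i hi
    obtain ⟨hmi, hκi⟩ := Finset.mem_filter.mp hi
    obtain ⟨hi0, hin⟩ := Finset.mem_Ioc.mp hmi
    have hcwi : 0 ≤ cw i := hcw i hmi
    rw [← Finset.sum_filter_add_sum_filter_not (Finset.Ioc 0 n) (fun j => κ j = 0)]
    have part1 : ∑ j ∈ t, cw i * cw j * |(pre f (i-1) + pre f i)/2 - (pre f (j-1) + pre f j)/2|
        = ∑ j ∈ t, cw i * cw j * |pre f i - pre f j| := by
      apply Finset.sum_congr rfl
      intro j hj
      rw [midatom i hi, midatom j hj]
    have part2 : ∑ j ∈ (Finset.Ioc 0 n).filter (fun j => ¬ κ j = 0),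
          cw i * cw j * |(pre f (i-1) + pre f i)/2 - (pre f (j-1) + pre f j)/2|
        ≤ cw i * (l^2/4) := by
      have e1 : ∀ j ∈ (Finset.Ioc 0 n).filter (fun j => ¬ κ j = 0),
          cw i * cw j * |(pre f (i-1) + pre f i)/2 - (pre f (j-1) + pre f j)/2|
          = cw i * (κ j * |(pre f (j-1) + pre f j)/2 - pre f i|) := by
        intro j hj
        obtain ⟨hmj, hκj⟩ := Finset.mem_filter.mp hj
        rw [midatom i hi, hfc j hmj hκj, abs_sub_comm]
        ring
      rw [Finset.sum_congr rfl e1, ← Finset.mul_sum]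
      apply mul_le_mul_of_nonneg_left _ hcwi
      have hsub : ∑ j ∈ (Finset.Ioc 0 n).filter (fun j => ¬ κ j = 0),
            κ j * |(pre f (j-1) + pre f j)/2 - pre f i|
          ≤ ∑ j ∈ Finset.Ioc 0 n, κ j * |(pre f (j-1) + pre f j)/2 - pre f i| := by
        apply Finset.sum_le_sum_of_subset_of_nonneg (Finset.filter_subset _ _)
        intro j hj _
        exact mul_nonneg (hκ j hj) (abs_nonneg _)
      exact le_trans hsub (crossbound hκ hf hsum hin)
    rw [part1]
    linarith
  calc ∑ i ∈ t, ∑ j ∈ Finset.Ioc 0 n,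
        cw i * cw j * |(pre f (i-1) + pre f i)/2 - (pre f (j-1) + pre f j)/2|
      ≤ ∑ i ∈ t, ((∑ j ∈ t, cw i * cw j * |pre f i - pre f j|) + cw i * (l^2/4)) :=
        Finset.sum_le_sum inner
    _ = (∑ i ∈ t, ∑ j ∈ t, cw i * cw j * |pre f i - pre f j|)
        + (∑ i ∈ t, cw i) * (l^2/4) := by
        rw [Finset.sum_add_distrib, ← Finset.sum_mul]
    _ ≤ (∑ i ∈ t, cw i)^2 * (l/2) / 2 + (∑ i ∈ t, cw i) * (l^2/4) := by
        have hsp := spread t cw (fun i => pre f i) (l/2) (by linarith)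
          (fun i hi => hcw i (Finset.mem_filter.mp hi).1) hrange
        linarith
    _ = (∑ i ∈ t, cw i) * l^2 / 4 + (∑ i ∈ t, cw i)^2 * l / 4 := by ring

/-- midpoint values of the three functionals -/
noncomputable def mid (f : ℕ → ℝ) (j : ℕ) : ℝ := (pre f (j-1) + pre f j)/2

lemma main2 {n : ℕ} (dx dy : ℕ → ℝ)
    (hsx : ∑ i ∈ Finset.Ioc 0 n, dx i = 0) (hsy : ∑ i ∈ Finset.Ioc 0 n, dy i = 0)
    (hcl : ∀ i ∈ Finset.Ioc 0 n, dx i = 0 ∨ dy i = 0 ∨ dx i = dy i) :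
    |∑ i ∈ Finset.Ioc 0 n, (mid dx i * dy i - mid dy i * dx i)|
      ≤ (∑ i ∈ Finset.Ioc 0 n, max |dx i| |dy i|)^2 / 6 := by
  classical
  set c : ℕ → ℝ := fun i => max |dx i| |dy i| with hc
  set L : ℝ := ∑ i ∈ Finset.Ioc 0 n, c i with hL
  have hc0 : ∀ i, 0 ≤ c i := fun i => le_trans (abs_nonneg _) (le_max_left _ _)
  have hL0 : 0 ≤ L := Finset.sum_nonneg (fun i _ => hc0 i)
  set cl : ℕ → ℕ := fun i => if dx i = 0 then 0 else if dy i = 0 then 1 else 2 with hcldef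
  have hcl0 : ∀ i, cl i = 0 → dx i = 0 := by
    intro i h
    simp only [hcldef] at h
    by_cases h1 : dx i = 0
    · exact h1
    · rw [if_neg h1] at h
      by_cases h2 : dy i = 0 <;> simp [h2] at h
  have hcl1 : ∀ i, cl i = 1 → dy i = 0 := by
    intro i h
    simp only [hcldef] at h
    by_cases h1 : dx i = 0
    · simp [h1] at h
    · rw [if_neg h1] at h
      by_cases h2 : dy i = 0
      · exact h2
      · simp [h2] at h
  have hcl2 : ∀ i, cl i = 2 → dx i ≠ 0 ∧ dy i ≠ 0 := by
    intro i h
    simp only [hcldef] at h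
    by_cases h1 : dx i = 0
    · simp [h1] at h
    · rw [if_neg h1] at h
      by_cases h2 : dy i = 0
      · simp [h2] at h
      · exact ⟨h1, h2⟩
  have hclv : ∀ i, cl i = 0 ∨ cl i = 1 ∨ cl i = 2 := by
    intro i
    simp only [hcldef]
    by_cases h1 : dx i = 0
    · left; simp [h1]
    · rw [if_neg h1]
      by_cases h2 : dy i = 0
      · right; left; simp [h2]
      · right; right; simp [h2]
  -- functional increments
  set fd : ℕ → ℕ → ℝ := fun d => if d = 0 then dx else if d = 1 then dy
    else (fun i => dx i - dy i) with hfd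
  set κd : ℕ → ℕ → ℝ := fun d i => if cl i = d then 0 else c i with hκd
  have sumfd : ∀ d, ∑ i ∈ Finset.Ioc 0 n, fd d i = 0 := by
    intro d
    by_cases h0 : d = 0
    · simpa [hfd, h0] using hsx
    by_cases h1 : d = 1
    · simpa [hfd, h0, h1] using hsy
    · simp only [hfd, if_neg h0, if_neg h1]
      rw [Finset.sum_sub_distrib, hsx, hsy]; ring
  have hκ0 : ∀ d, ∀ i ∈ Finset.Ioc 0 n, 0 ≤ κd d i := by
    intro d i _
    simp only [hκd]
    by_cases h : cl i = d
    · rw [if_pos h]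
    · rw [if_neg h]; exact hc0 i
  have hκc : ∀ d, ∀ i ∈ Finset.Ioc 0 n, κd d i ≠ 0 → κd d i = c i := by
    intro d i _ hne
    simp only [hκd] at *
    by_cases h : cl i = d
    · rw [if_pos h] at hne; exact absurd rfl hne
    · rw [if_neg h]
  have hfκ : ∀ d, d < 3 → ∀ i ∈ Finset.Ioc 0 n, |fd d i| ≤ κd d i := by
    intro d hd i hi
    have hcli := hcl i hi
    by_cases hclid : cl i = d
    · simp only [hκd, if_pos hclid]
      interval_cases d
      · have := hcl0 i hclid
        simp [hfd, this]
      · have := hcl1 i hclid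
        simp [hfd, this]
      · obtain ⟨h1, h2⟩ := hcl2 i hclid
        have hdxy : dx i = dy i := by tauto
        simp [hfd, hdxy]
    · simp only [hκd, if_neg hclid]
      interval_cases d
      · simp only [hfd, if_pos rfl, hc]; exact le_max_left _ _
      · simp only [hfd]; norm_num; exact le_max_right _ _
      · simp only [hfd]; norm_num
        rcases hcli with h | h | h
        · rw [h]; simp only [zero_sub, abs_neg, hc]; exact le_max_right _ _
        · rw [h]; simp only [sub_zero, hc]; exact le_max_left _ _
        · rw [h]; simp only [sub_self, abs_zero, hc]; positivity
  -- weights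
  set w : ℕ → ℝ := fun i => if cl i = 0 then dy i else if cl i = 1 then -dx i else dx i with hw
  have hwc : ∀ i ∈ Finset.Ioc 0 n, |w i| ≤ c i := by
    intro i hi
    rcases hclv i with h | h | h
    · simp only [hw, h]
      norm_num [hc]
    · simp only [hw, h]
      norm_num [hc]
    · simp only [hw, h]
      norm_num [hc]
  -- linearity of pre and mid
  have pre_sub : ∀ j, pre (fun i => dx i - dy i) j = pre dx j - pre dy j := by
    intro j; simp only [pre]; rw [Finset.sum_sub_distrib]
  have mid_sub : ∀ j, mid (fun i => dx i - dy i) j = mid dx j - mid dy j := by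
    intro j; simp only [mid, pre_sub]; ring
  -- term identity
  have claim1 : ∀ i ∈ Finset.Ioc 0 n,
      mid dx i * dy i - mid dy i * dx i = w i * mid (fd (cl i)) i := by
    intro i hi
    have hcli := hcl i hi
    rcases hclv i with h | h | h <;> rw [h] <;> simp only [hw, h, hfd]
    · have h0 := hcl0 i h
      norm_num [h0]
      ring
    · have h0 := hcl1 i h
      norm_num [h0]
      ring
    · obtain ⟨h1, h2⟩ := hcl2 i h
      have hdxy : dx i = dy i := by tauto
      norm_num [mid_sub]
      rw [hdxy]
      ring
  -- the mean cancellation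
  have split3 : ∀ F : ℕ → ℝ, ∑ i ∈ Finset.Ioc 0 n, F i
      = (∑ i ∈ (Finset.Ioc 0 n).filter (fun i => cl i = 0), F i)
      + (∑ i ∈ (Finset.Ioc 0 n).filter (fun i => cl i = 1), F i)
      + (∑ i ∈ (Finset.Ioc 0 n).filter (fun i => cl i = 2), F i) := by
    intro F
    rw [Finset.sum_filter, Finset.sum_filter, Finset.sum_filter,
      ← Finset.sum_add_distrib, ← Finset.sum_add_distrib]
    apply Finset.sum_congr rfl
    intro i _
    rcases hclv i with h | h | h <;> simp [h]
  have claim2 : ∀ j : ℕ, ∑ i ∈ Finset.Ioc 0 n, w i * mid (fd (cl i)) j = 0 := by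
    intro j
    rw [split3 (fun i => w i * mid (fd (cl i)) j)]
    have e0 : ∑ i ∈ (Finset.Ioc 0 n).filter (fun i => cl i = 0), w i * mid (fd (cl i)) j
        = (∑ i ∈ (Finset.Ioc 0 n).filter (fun i => cl i = 0), dy i) * mid dx j := by
      rw [Finset.sum_mul]
      apply Finset.sum_congr rfl
      intro i hi
      have h := (Finset.mem_filter.mp hi).2
      rw [h]
      simp only [hw, h, if_pos rfl, hfd]
      norm_num
    have e1 : ∑ i ∈ (Finset.Ioc 0 n).filter (fun i => cl i = 1), w i * mid (fd (cl i)) j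
        = (∑ i ∈ (Finset.Ioc 0 n).filter (fun i => cl i = 1), dx i) * (- mid dy j) := by
      rw [Finset.sum_mul]
      apply Finset.sum_congr rfl
      intro i hi
      have h := (Finset.mem_filter.mp hi).2
      rw [h]
      simp only [hw, h, hfd]
      norm_num
    have e2 : ∑ i ∈ (Finset.Ioc 0 n).filter (fun i => cl i = 2), w i * mid (fd (cl i)) j
        = (∑ i ∈ (Finset.Ioc 0 n).filter (fun i => cl i = 2), dx i)
            * (mid dx j - mid dy j) := by
      rw [Finset.sum_mul]
      apply Finset.sum_congr rfl
      intro i hi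
      have h := (Finset.mem_filter.mp hi).2
      rw [h]
      simp only [hw, h, hfd]
      norm_num [mid_sub]
    rw [e0, e1, e2]
    -- closure relations
    have hx0 : ∀ i ∈ (Finset.Ioc 0 n).filter (fun i => cl i = 0), dx i = 0 := by
      intro i hi; exact hcl0 i (Finset.mem_filter.mp hi).2
    have hy1 : ∀ i ∈ (Finset.Ioc 0 n).filter (fun i => cl i = 1), dy i = 0 := by
      intro i hi; exact hcl1 i (Finset.mem_filter.mp hi).2
    have hxy2 : ∀ i ∈ (Finset.Ioc 0 n).filter (fun i => cl i = 2), dx i = dy i := by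
      intro i hi
      obtain ⟨hm, h⟩ := Finset.mem_filter.mp hi
      obtain ⟨h1, h2⟩ := hcl2 i h
      have := hcl i hm
      tauto
    have sx := split3 dx
    have sy := split3 dy
    rw [Finset.sum_eq_zero hx0] at sx
    rw [Finset.sum_eq_zero hy1] at sy
    rw [Finset.sum_congr rfl hxy2] at sx
    rw [hsx] at sx
    rw [hsy] at sy
    have exy : (∑ i ∈ (Finset.Ioc 0 n).filter (fun i => cl i = 2), dx i)
        = ∑ i ∈ (Finset.Ioc 0 n).filter (fun i => cl i = 2), dy i :=
      Finset.sum_congr rfl hxy2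
    have eA : (∑ i ∈ (Finset.Ioc 0 n).filter (fun i => cl i = 0), dy i)
        = -(∑ i ∈ (Finset.Ioc 0 n).filter (fun i => cl i = 2), dy i) := by linarith [sy]
    have eB : (∑ i ∈ (Finset.Ioc 0 n).filter (fun i => cl i = 1), dx i)
        = -(∑ i ∈ (Finset.Ioc 0 n).filter (fun i => cl i = 2), dy i) := by linarith [sx]
    rw [eA, eB, exy]
    ring
  -- the main double-sum bound
  set DD : ℝ := ∑ i ∈ Finset.Ioc 0 n, (mid dx i * dy i - mid dy i * dx i) with hDDdef
  have hDD1 : DD = ∑ i ∈ Finset.Ioc 0 n, w i * mid (fd (cl i)) i :=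
    Finset.sum_congr rfl claim1
  have hDDj : ∀ j : ℕ, DD = ∑ i ∈ Finset.Ioc 0 n,
      w i * (mid (fd (cl i)) i - mid (fd (cl i)) j) := by
    intro j
    have e : ∑ i ∈ Finset.Ioc 0 n, w i * (mid (fd (cl i)) i - mid (fd (cl i)) j)
        = (∑ i ∈ Finset.Ioc 0 n, w i * mid (fd (cl i)) i)
          - ∑ i ∈ Finset.Ioc 0 n, w i * mid (fd (cl i)) j := by
      rw [← Finset.sum_sub_distrib]
      apply Finset.sum_congr rfl
      intro i _; ring
    rw [e, claim2 j, hDD1]; ring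
  have keyid : L * DD = ∑ j ∈ Finset.Ioc 0 n, ∑ i ∈ Finset.Ioc 0 n,
      c j * (w i * (mid (fd (cl i)) i - mid (fd (cl i)) j)) := by
    rw [hL, Finset.sum_mul]
    apply Finset.sum_congr rfl
    intro j _
    rw [hDDj j, Finset.mul_sum]
  set T : ℝ := ∑ i ∈ Finset.Ioc 0 n, ∑ j ∈ Finset.Ioc 0 n,
      c i * c j * |mid (fd (cl i)) i - mid (fd (cl i)) j| with hT
  have habs : L * |DD| ≤ T := by
    have h1 : |L * DD| ≤ T := by
      rw [keyid]
      refine le_trans (Finset.abs_sum_le_sum_abs _ _) ?_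
      rw [hT, Finset.sum_comm]
      apply Finset.sum_le_sum
      intro j hj
      refine le_trans (Finset.abs_sum_le_sum_abs _ _) ?_
      apply Finset.sum_le_sum
      intro i hi
      rw [abs_mul, abs_mul]
      rw [abs_of_nonneg (hc0 j)]
      have := hwc i hi
      have h2 : |w i| * |mid (fd (cl i)) i - mid (fd (cl i)) j|
          ≤ c i * |mid (fd (cl i)) i - mid (fd (cl i)) j| :=
        mul_le_mul_of_nonneg_right this (abs_nonneg _)
      calc c j * (|w i| * |mid (fd (cl i)) i - mid (fd (cl i)) j|)
          ≤ c j * (c i * |mid (fd (cl i)) i - mid (fd (cl i)) j|) :=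
            mul_le_mul_of_nonneg_left h2 (hc0 j)
        _ = c i * c j * |mid (fd (cl i)) i - mid (fd (cl i)) j| := by ring
    calc L * |DD| = |L * DD| := by rw [abs_mul, abs_of_nonneg hL0]
      _ ≤ T := h1
  -- split T by class and apply core
  set Ld : ℕ → ℝ := fun d => ∑ i ∈ (Finset.Ioc 0 n).filter (fun i => κd d i = 0), c i with hLd
  set ld : ℕ → ℝ := fun d => pre (κd d) n with hld
  have hLd0 : ∀ d, 0 ≤ Ld d := by
    intro d
    apply Finset.sum_nonneg
    intro i _; exact hc0 i
  have hld0 : ∀ d, 0 ≤ ld d := by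
    intro d
    apply Finset.sum_nonneg
    intro i hi; exact hκ0 d i hi
  have hLdl : ∀ d, Ld d + ld d = L := by
    intro d
    have e1 : L = (∑ i ∈ (Finset.Ioc 0 n).filter (fun i => κd d i = 0), c i)
        + ∑ i ∈ (Finset.Ioc 0 n).filter (fun i => ¬ κd d i = 0), c i := by
      rw [hL, ← Finset.sum_filter_add_sum_filter_not (Finset.Ioc 0 n) (fun i => κd d i = 0) c]
    have e2 : ∑ i ∈ (Finset.Ioc 0 n).filter (fun i => ¬ κd d i = 0), c i
        = ∑ i ∈ (Finset.Ioc 0 n).filter (fun i => ¬ κd d i = 0), κd d i := by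
      apply Finset.sum_congr rfl
      intro i hi
      obtain ⟨hm, hne⟩ := Finset.mem_filter.mp hi
      exact (hκc d i hm hne).symm
    have e3 : ld d = (∑ i ∈ (Finset.Ioc 0 n).filter (fun i => κd d i = 0), κd d i)
        + ∑ i ∈ (Finset.Ioc 0 n).filter (fun i => ¬ κd d i = 0), κd d i := by
      rw [hld]
      simp only [pre]
      rw [← Finset.sum_filter_add_sum_filter_not (Finset.Ioc 0 n) (fun i => κd d i = 0) (κd d)]
    have e4 : ∑ i ∈ (Finset.Ioc 0 n).filter (fun i => κd d i = 0), κd d i = 0 := by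
      apply Finset.sum_eq_zero
      intro i hi
      exact (Finset.mem_filter.mp hi).2
    rw [hLd]
    simp only
    linarith [e1, e2, e3, e4]
  have hLdcl : ∀ d, Ld d = ∑ i ∈ (Finset.Ioc 0 n).filter (fun i => cl i = d), c i := by
    intro d
    rw [hLd]
    simp only
    symm
    apply Finset.sum_subset
    · intro i hi
      simp only [Finset.mem_filter] at hi ⊢
      exact ⟨hi.1, by simp only [hκd, if_pos hi.2]⟩
    · intro i hi hni
      simp only [Finset.mem_filter] at hi hni
      by_cases hclid : cl i = d
      · exact absurd ⟨hi.1, hclid⟩ hni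
      · have hκi := hi.2
        simp only [hκd, if_neg hclid] at hκi
        exact hκi
  have hsum3 : Ld 0 + Ld 1 + Ld 2 = L := by
    rw [hLdcl 0, hLdcl 1, hLdcl 2, hL, split3 c]
  -- per-class bounds via core
  have perclass : ∀ d, d < 3 →
      ∑ i ∈ (Finset.Ioc 0 n).filter (fun i => cl i = d), ∑ j ∈ Finset.Ioc 0 n,
        c i * c j * |mid (fd d) i - mid (fd d) j|
      ≤ Ld d * (ld d)^2/4 + (Ld d)^2 * ld d/4 := by
    intro d hd
    have hsub : (Finset.Ioc 0 n).filter (fun i => cl i = d)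
        ⊆ (Finset.Ioc 0 n).filter (fun i => κd d i = 0) := by
      intro i hi
      obtain ⟨hm, hclid⟩ := Finset.mem_filter.mp hi
      exact Finset.mem_filter.mpr ⟨hm, by simp only [hκd, if_pos hclid]⟩
    have h1 : ∑ i ∈ (Finset.Ioc 0 n).filter (fun i => cl i = d), ∑ j ∈ Finset.Ioc 0 n,
          c i * c j * |mid (fd d) i - mid (fd d) j|
        ≤ ∑ i ∈ (Finset.Ioc 0 n).filter (fun i => κd d i = 0), ∑ j ∈ Finset.Ioc 0 n,
          c i * c j * |mid (fd d) i - mid (fd d) j| := by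
      apply Finset.sum_le_sum_of_subset_of_nonneg hsub
      intro i _ _
      apply Finset.sum_nonneg
      intro j _
      positivity
    refine le_trans h1 ?_
    have := core (fd d) (κd d) c (hκ0 d) (fun i _ => hc0 i) (hfκ d hd) (hκc d) (sumfd d)
    simp only [mid] at *
    exact this
  -- assemble
  have hTsplit : T ≤ ∑ d ∈ Finset.range 3, (Ld d * (ld d)^2/4 + (Ld d)^2 * ld d/4) := by
    rw [hT, split3 (fun i => ∑ j ∈ Finset.Ioc 0 n,
      c i * c j * |mid (fd (cl i)) i - mid (fd (cl i)) j|)]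
    have erw : ∀ d, (∑ i ∈ (Finset.Ioc 0 n).filter (fun i => cl i = d),
          ∑ j ∈ Finset.Ioc 0 n, c i * c j * |mid (fd (cl i)) i - mid (fd (cl i)) j|)
        = ∑ i ∈ (Finset.Ioc 0 n).filter (fun i => cl i = d),
          ∑ j ∈ Finset.Ioc 0 n, c i * c j * |mid (fd d) i - mid (fd d) j| := by
      intro d
      apply Finset.sum_congr rfl
      intro i hi
      have h := (Finset.mem_filter.mp hi).2
      rw [h]
    rw [erw 0, erw 1, erw 2]
    rw [Finset.sum_range_succ, Finset.sum_range_succ, Finset.sum_range_one]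
    have b0 := perclass 0 (by norm_num)
    have b1 := perclass 1 (by norm_num)
    have b2 := perclass 2 (by norm_num)
    linarith
  have hfinal : L * |DD| ≤ L^3/6 := by
    have e : ∑ d ∈ Finset.range 3, (Ld d * (ld d)^2/4 + (Ld d)^2 * ld d/4)
        = (Ld 0 * (L - Ld 0) + Ld 1 * (L - Ld 1) + Ld 2 * (L - Ld 2)) * L / 4 := by
      rw [Finset.sum_range_succ, Finset.sum_range_succ, Finset.sum_range_one]
      have e0 : ld 0 = L - Ld 0 := by linarith [hLdl 0]
      have e1 : ld 1 = L - Ld 1 := by linarith [hLdl 1]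
      have e2 : ld 2 = L - Ld 2 := by linarith [hLdl 2]
      rw [e0, e1, e2]
      ring
    have hineq : (Ld 0 * (L - Ld 0) + Ld 1 * (L - Ld 1) + Ld 2 * (L - Ld 2)) * L / 4
        ≤ L^3/6 := by
      have h3 : Ld 0 + Ld 1 + Ld 2 = L := hsum3
      have key : Ld 0 * (L - Ld 0) + Ld 1 * (L - Ld 1) + Ld 2 * (L - Ld 2) ≤ 2/3 * L^2 := by
        nlinarith [sq_nonneg (Ld 0 - Ld 1), sq_nonneg (Ld 0 - Ld 2), sq_nonneg (Ld 1 - Ld 2)]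
      have h4 : (Ld 0 * (L - Ld 0) + Ld 1 * (L - Ld 1) + Ld 2 * (L - Ld 2)) * L
          ≤ (2/3 * L^2) * L := mul_le_mul_of_nonneg_right key hL0
      linarith
    calc L * |DD| ≤ T := habs
      _ ≤ _ := hTsplit
      _ = _ := e
      _ ≤ L^3/6 := hineq
  -- conclude
  have goalshow : |DD| ≤ L^2/6 → |DD| ≤ (∑ i ∈ Finset.Ioc 0 n, c i)^2/6 := by
    rw [← hL]; exact id
  rcases eq_or_lt_of_le hL0 with hLz | hLpos
  · -- L = 0 : all increments vanish
    have hcz : ∀ i ∈ Finset.Ioc 0 n, c i = 0 := by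
      intro i hi
      have := (Finset.sum_eq_zero_iff_of_nonneg (fun i _ => hc0 i)).mp hLz.symm
      exact this i hi
    have hDz : DD = 0 := by
      rw [hDDdef]
      apply Finset.sum_eq_zero
      intro i hi
      have hci := hcz i hi
      have hdx0 : dx i = 0 := by
        have h1 : |dx i| ≤ c i := le_max_left _ _
        rw [hci] at h1
        exact abs_eq_zero.mp (le_antisymm h1 (abs_nonneg _))
      have hdy0 : dy i = 0 := by
        have h1 : |dy i| ≤ c i := le_max_right _ _
        rw [hci] at h1
        exact abs_eq_zero.mp (le_antisymm h1 (abs_nonneg _))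
      rw [hdx0, hdy0]; ring
    apply goalshow
    rw [hDz, ← hLz]
    norm_num
  · apply goalshow
    nlinarith [hfinal, hLpos]

lemma hexdir (k : ℤ) : ∃ p : ℝ × ℝ,
    Real.cos ((k : ℝ) * Real.pi / 3) = p.1 ∧ Real.sin ((k : ℝ) * Real.pi / 3) = p.2 ∧
    (p = (1, 0) ∨ p = (1/2, Real.sqrt 3/2) ∨ p = (-(1/2), Real.sqrt 3/2) ∨ p = (-1, 0)
      ∨ p = (-(1/2), -(Real.sqrt 3/2)) ∨ p = (1/2, -(Real.sqrt 3/2))) := by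
  set r : ℤ := k % 6 with hr
  set q : ℤ := k / 6 with hq
  have hqr : k = 6 * q + r := by rw [hq, hr]; omega
  have hangle : (k : ℝ) * Real.pi / 3 = (r : ℝ) * Real.pi / 3 + (q : ℝ) * (2 * Real.pi) := by
    have : (k : ℝ) = 6 * (q : ℝ) + (r : ℝ) := by exact_mod_cast congrArg (Int.cast : ℤ → ℝ) hqr
    rw [this]; ring
  have hcos : Real.cos ((k : ℝ) * Real.pi / 3) = Real.cos ((r : ℝ) * Real.pi / 3) := by
    rw [hangle, Real.cos_add_int_mul_two_pi]
  have hsin : Real.sin ((k : ℝ) * Real.pi / 3) = Real.sin ((r : ℝ) * Real.pi / 3) := by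
    rw [hangle, Real.sin_add_int_mul_two_pi]
  have hr0 : 0 ≤ r := Int.emod_nonneg k (by norm_num)
  have hr6 : r < 6 := Int.emod_lt_of_pos k (by norm_num)
  interval_cases r
  · exact ⟨(1, 0), by simpa using hcos, by simpa using hsin, Or.inl rfl⟩
  · refine ⟨(1/2, Real.sqrt 3/2), ?_, ?_, Or.inr (Or.inl rfl)⟩
    · rw [hcos]; norm_num [Real.cos_pi_div_three]
    · rw [hsin]; norm_num [Real.sin_pi_div_three]
  · refine ⟨(-(1/2), Real.sqrt 3/2), ?_, ?_, Or.inr (Or.inr (Or.inl rfl))⟩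
    · rw [hcos]
      have : ((2:ℤ) : ℝ) * Real.pi / 3 = Real.pi - Real.pi/3 := by push_cast; ring
      rw [this, Real.cos_pi_sub, Real.cos_pi_div_three]
    · rw [hsin]
      have : ((2:ℤ) : ℝ) * Real.pi / 3 = Real.pi - Real.pi/3 := by push_cast; ring
      rw [this, Real.sin_pi_sub, Real.sin_pi_div_three]
  · refine ⟨(-1, 0), ?_, ?_, Or.inr (Or.inr (Or.inr (Or.inl rfl)))⟩
    · rw [hcos]
      have : ((3:ℤ) : ℝ) * Real.pi / 3 = Real.pi := by push_cast; ring
      rw [this, Real.cos_pi]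
    · rw [hsin]
      have : ((3:ℤ) : ℝ) * Real.pi / 3 = Real.pi := by push_cast; ring
      rw [this, Real.sin_pi]
  · refine ⟨(-(1/2), -(Real.sqrt 3/2)), ?_, ?_, Or.inr (Or.inr (Or.inr (Or.inr (Or.inl rfl))))⟩
    · rw [hcos]
      have : ((4:ℤ) : ℝ) * Real.pi / 3 = 2 * Real.pi - (Real.pi - Real.pi/3) := by push_cast; ring
      rw [this, Real.cos_two_pi_sub, Real.cos_pi_sub, Real.cos_pi_div_three]
    · rw [hsin]
      have : ((4:ℤ) : ℝ) * Real.pi / 3 = 2 * Real.pi - (Real.pi - Real.pi/3) := by push_cast; ring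
      rw [this, Real.sin_two_pi_sub, Real.sin_pi_sub, Real.sin_pi_div_three]
  · refine ⟨(1/2, -(Real.sqrt 3/2)), ?_, ?_, Or.inr (Or.inr (Or.inr (Or.inr (Or.inr rfl))))⟩
    · rw [hcos]
      have : ((5:ℤ) : ℝ) * Real.pi / 3 = 2 * Real.pi - Real.pi/3 := by push_cast; ring
      rw [this, Real.cos_two_pi_sub, Real.cos_pi_div_three]
    · rw [hsin]
      have : ((5:ℤ) : ℝ) * Real.pi / 3 = 2 * Real.pi - Real.pi/3 := by push_cast; ring
      rw [this, Real.sin_two_pi_sub, Real.sin_pi_div_three]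

/-- Among closed polygons all of whose edges point in the six directions `θ = kπ/3`,
perimeter² ≥ 8√3 · |area|, with equality for the regular hexagon: none encloses
a given area with shorter perimeter than the regular hexagon. -/
theorem stmt3 (m : ℕ) (hm : 0 < m) (v : ℕ → ℝ × ℝ) (hclosed : v m = v 0)
    (hdirs : ∀ i, 1 ≤ i → i ≤ m → ∃ (k : ℤ) (c : ℝ), 0 ≤ c ∧
      v i - v (i - 1) =
        c • ((Real.cos ((k : ℝ) * Real.pi / 3), Real.sin ((k : ℝ) * Real.pi / 3)) : ℝ × ℝ))
    (L A : ℝ)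
    (hL : L = ∑ i ∈ Finset.Icc 1 m, elen (v i - v (i - 1)))
    (hA : A = (1 / 2) * ∑ i ∈ Finset.Icc 1 m, cross (v (i - 1)) (v i)) :
    L ^ 2 ≥ 8 * Real.sqrt 3 * |A| := by
  have h3 : Real.sqrt 3 ^ 2 = 3 := Real.sq_sqrt (by norm_num)
  have h3n : (0:ℝ) ≤ Real.sqrt 3 := Real.sqrt_nonneg 3
  have hIcc : Finset.Icc 1 m = Finset.Ioc 0 m := by
    ext x; simp only [Finset.mem_Icc, Finset.mem_Ioc]; omega
  set X : ℕ → ℝ := fun i => 2 * (v i).2 with hX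
  set Y : ℕ → ℝ := fun i => (v i).2 - Real.sqrt 3 * (v i).1 with hY
  set dx : ℕ → ℝ := fun i => X i - X (i-1) with hdx
  set dy : ℕ → ℝ := fun i => Y i - Y (i-1) with hdy
  -- edge facts
  have edgefact : ∀ i ∈ Finset.Ioc 0 m,
      (dx i = 0 ∨ dy i = 0 ∨ dx i = dy i) ∧
      max |dx i| |dy i| = Real.sqrt 3 * elen (v i - v (i - 1)) := by
    intro i hi
    obtain ⟨hi1, hi2⟩ := Finset.mem_Ioc.mp hi
    obtain ⟨k, c, hc0, heq⟩ := hdirs i hi1 hi2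
    set θ : ℝ := (k : ℝ) * Real.pi / 3 with hθ
    have hw1 : (v i).1 - (v (i-1)).1 = c * Real.cos θ := by
      have h := congrArg Prod.fst heq
      simpa [Prod.smul_def, smul_eq_mul] using h
    have hw2 : (v i).2 - (v (i-1)).2 = c * Real.sin θ := by
      have h := congrArg Prod.snd heq
      simpa [Prod.smul_def, smul_eq_mul] using h
    have helen : elen (v i - v (i-1)) = c := by
      have e1 : (v i - v (i-1)).1 = c * Real.cos θ := by
        simpa using hw1
      have e2 : (v i - v (i-1)).2 = c * Real.sin θ := by
        simpa using hw2
      rw [elen, e1, e2]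
      have e3 : (c * Real.cos θ)^2 + (c * Real.sin θ)^2
          = c^2 * (Real.sin θ^2 + Real.cos θ^2) := by ring
      rw [e3, Real.sin_sq_add_cos_sq, mul_one, Real.sqrt_sq hc0]
    have hdxv : dx i = 2 * (c * Real.sin θ) := by
      simp only [hdx, hX]; linarith [hw2]
    have hdyv : dy i = c * Real.sin θ - Real.sqrt 3 * (c * Real.cos θ) := by
      simp only [hdy, hY]; nlinarith [hw1, hw2]
    have hsc : 0 ≤ Real.sqrt 3 * c := mul_nonneg h3n hc0
    obtain ⟨p, hcos, hsin, hp⟩ := hexdir k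
    rw [← hθ] at hcos hsin
    rw [helen]
    rcases hp with rfl | rfl | rfl | rfl | rfl | rfl
    · -- (1,0): dx = 0, dy = -√3 c
      have hcosv : Real.cos θ = 1 := hcos
      have hsinv : Real.sin θ = 0 := hsin
      have hdx0 : dx i = 0 := by rw [hdxv, hsinv]; ring
      have hdy0 : dy i = -(Real.sqrt 3 * c) := by rw [hdyv, hsinv, hcosv]; ring
      refine ⟨Or.inl hdx0, ?_⟩
      rw [hdx0, hdy0, abs_zero, abs_neg, abs_of_nonneg hsc, max_eq_right hsc]
    · -- (1/2, √3/2): dx = √3 c, dy = 0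
      have hcosv : Real.cos θ = 1/2 := hcos
      have hsinv : Real.sin θ = Real.sqrt 3/2 := hsin
      have hdx0 : dx i = Real.sqrt 3 * c := by rw [hdxv, hsinv]; ring
      have hdy0 : dy i = 0 := by rw [hdyv, hsinv, hcosv]; ring
      refine ⟨Or.inr (Or.inl hdy0), ?_⟩
      rw [hdx0, hdy0, abs_zero, abs_of_nonneg hsc, max_eq_left hsc]
    · -- (-1/2, √3/2): dx = √3 c = dy
      have hcosv : Real.cos θ = -(1/2) := hcos
      have hsinv : Real.sin θ = Real.sqrt 3/2 := hsin
      have hdx0 : dx i = Real.sqrt 3 * c := by rw [hdxv, hsinv]; ring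
      have hdy0 : dy i = Real.sqrt 3 * c := by rw [hdyv, hsinv, hcosv]; ring
      refine ⟨Or.inr (Or.inr (by rw [hdx0, hdy0])), ?_⟩
      rw [hdx0, hdy0, abs_of_nonneg hsc, max_self]
    · -- (-1, 0): dx = 0, dy = √3 c
      have hcosv : Real.cos θ = -1 := hcos
      have hsinv : Real.sin θ = 0 := hsin
      have hdx0 : dx i = 0 := by rw [hdxv, hsinv]; ring
      have hdy0 : dy i = Real.sqrt 3 * c := by rw [hdyv, hsinv, hcosv]; ring
      refine ⟨Or.inl hdx0, ?_⟩
      rw [hdx0, hdy0, abs_zero, abs_of_nonneg hsc, max_eq_right hsc]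
    · -- (-1/2, -√3/2): dx = -√3 c, dy = 0
      have hcosv : Real.cos θ = -(1/2) := hcos
      have hsinv : Real.sin θ = -(Real.sqrt 3/2) := hsin
      have hdx0 : dx i = -(Real.sqrt 3 * c) := by rw [hdxv, hsinv]; ring
      have hdy0 : dy i = 0 := by rw [hdyv, hsinv, hcosv]; ring
      refine ⟨Or.inr (Or.inl hdy0), ?_⟩
      rw [hdx0, hdy0, abs_zero, abs_neg, abs_of_nonneg hsc, max_eq_left hsc]
    · -- (1/2, -√3/2)
      have hcosv : Real.cos θ = 1/2 := hcos
      have hsinv : Real.sin θ = -(Real.sqrt 3/2) := hsin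
      have hdx0 : dx i = -(Real.sqrt 3 * c) := by rw [hdxv, hsinv]; ring
      have hdy0 : dy i = -(Real.sqrt 3 * c) := by rw [hdyv, hsinv, hcosv]; ring
      refine ⟨Or.inr (Or.inr (by rw [hdx0, hdy0])), ?_⟩
      rw [hdx0, hdy0, abs_neg, abs_of_nonneg hsc, max_self]
  -- closure sums
  have hsx : ∑ i ∈ Finset.Ioc 0 m, dx i = 0 := by
    have := telescope_Ioc X (Nat.zero_le m)
    have hXm : X m = X 0 := by simp only [hX, hclosed]
    rw [hXm] at this
    simpa [hdx] using this
  have hsy : ∑ i ∈ Finset.Ioc 0 m, dy i = 0 := by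
    have := telescope_Ioc Y (Nat.zero_le m)
    have hYm : Y m = Y 0 := by simp only [hY, hclosed]
    rw [hYm] at this
    simpa [hdy] using this
  have hkey := main2 dx dy hsx hsy (fun i hi => (edgefact i hi).1)
  -- translate mid-sums to cross-sums
  have hprex : ∀ j : ℕ, pre dx j = X j - X 0 := by
    intro j
    have := telescope_Ioc X (Nat.zero_le j)
    simpa [pre, hdx] using this
  have hprey : ∀ j : ℕ, pre dy j = Y j - Y 0 := by
    intro j
    have := telescope_Ioc Y (Nat.zero_le j)
    simpa [pre, hdy] using this
  have hmidsum : ∑ i ∈ Finset.Ioc 0 m, (mid dx i * dy i - mid dy i * dx i)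
      = 2 * Real.sqrt 3 * ∑ i ∈ Finset.Ioc 0 m, cross (v (i-1)) (v i) := by
    have e1 : ∀ i ∈ Finset.Ioc 0 m, mid dx i * dy i - mid dy i * dx i
        = ((X (i-1) + X i)/2 * dy i - (Y (i-1) + Y i)/2 * dx i)
          - X 0 * dy i + Y 0 * dx i := by
      intro i _
      rw [mid, mid, hprex, hprex, hprey, hprey]
      ring
    rw [Finset.sum_congr rfl e1]
    have e2 : ∀ i ∈ Finset.Ioc 0 m,
        (X (i-1) + X i)/2 * dy i - (Y (i-1) + Y i)/2 * dx i
        = 2 * Real.sqrt 3 * cross (v (i-1)) (v i) := by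
      intro i _
      simp only [hX, hY, hdx, hdy, cross]
      ring
    have e3 : ∑ i ∈ Finset.Ioc 0 m,
        (((X (i-1) + X i)/2 * dy i - (Y (i-1) + Y i)/2 * dx i) - X 0 * dy i + Y 0 * dx i)
        = (∑ i ∈ Finset.Ioc 0 m, ((X (i-1) + X i)/2 * dy i - (Y (i-1) + Y i)/2 * dx i))
          - X 0 * (∑ i ∈ Finset.Ioc 0 m, dy i) + Y 0 * (∑ i ∈ Finset.Ioc 0 m, dx i) := by
      rw [Finset.mul_sum, Finset.mul_sum, ← Finset.sum_sub_distrib, ← Finset.sum_add_distrib]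
    rw [e3, hsx, hsy, Finset.sum_congr rfl e2, ← Finset.mul_sum]
    ring
  have hLsum : ∑ i ∈ Finset.Ioc 0 m, max |dx i| |dy i| = Real.sqrt 3 * L := by
    rw [hL, hIcc, Finset.mul_sum]
    exact Finset.sum_congr rfl (fun i hi => (edgefact i hi).2)
  rw [hmidsum, hLsum] at hkey
  -- finish
  have hcrossA : ∑ i ∈ Finset.Ioc 0 m, cross (v (i-1)) (v i) = 2 * A := by
    rw [hA, hIcc]; ring
  rw [hcrossA] at hkey
  have habs2 : |2 * Real.sqrt 3 * (2 * A)| = 4 * Real.sqrt 3 * |A| := by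
    simp only [abs_mul, abs_of_nonneg h3n, abs_two]
    ring
  rw [habs2] at hkey
  have hrhs : (Real.sqrt 3 * L)^2 / 6 = L^2 / 2 := by
    rw [mul_pow, h3]; ring
  rw [hrhs] at hkey
  linarith
end

section
/- For every finite nonempty set S of cells of the hexagonal honeycomb with |S| = n, the exterior perimeter satisfies t(S) ≥ √(48n − 12), equivalently t(S)² ≥ 48n − 12. -/
open Pointwise

def reps (X Y : Finset ℤ) (z : ℤ) : ℕ :=
  ((X ×ˢ Y).filter (fun p => p.1 + p.2 = z)).card

lemma reps_le_right (X Y : Finset ℤ) (z : ℤ) : reps X Y z ≤ Y.card := by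
  classical
  apply Finset.card_le_card_of_injOn Prod.snd
  · intro p hp
    exact (Finset.mem_product.mp (Finset.mem_filter.mp hp).1).2
  · intro p hp q hq h
    have h1 := (Finset.mem_filter.mp hp).2
    have h2 := (Finset.mem_filter.mp hq).2
    exact Prod.ext (by omega) h

lemma sum_reps (X Y : Finset ℤ) : ∑ z ∈ X + Y, reps X Y z = X.card * Y.card := by
  classical
  rw [← Finset.card_product X Y]
  exact (Finset.card_eq_sum_card_fiberwise (fun p hp => by
    rcases Finset.mem_product.mp hp with ⟨h1, h2⟩
    exact Finset.add_mem_add h1 h2)).symm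

lemma reps_mono (X Y Y' : Finset ℤ) (h : Y' ⊆ Y) (z : ℤ) : reps X Y' z ≤ reps X Y z := by
  apply Finset.card_le_card
  intro p hp
  rcases Finset.mem_filter.mp hp with ⟨hp1, hp2⟩
  rcases Finset.mem_product.mp hp1 with ⟨ha, hb⟩
  exact Finset.mem_filter.mpr ⟨Finset.mem_product.mpr ⟨ha, h hb⟩, hp2⟩

/-- rank in X : number of strictly larger elements -/
def rnk (X : Finset ℤ) (x : ℤ) : ℕ := (X.filter (fun x' => x < x')).card

lemma rnk_strict (X : Finset ℤ) {u v : ℤ} (hv : v ∈ X) (huv : u < v) :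
    rnk X v < rnk X u := by
  classical
  apply Finset.card_lt_card
  constructor
  · intro w hw
    rcases Finset.mem_filter.mp hw with ⟨h1, h2⟩
    exact Finset.mem_filter.mpr ⟨h1, by omega⟩
  · intro hsub
    have : v ∈ X.filter (fun w => v < w) := hsub (Finset.mem_filter.mpr ⟨hv, huv⟩)
    have := (Finset.mem_filter.mp this).2
    omega

lemma rnk_lt_card (X : Finset ℤ) {x : ℤ} (hx : x ∈ X) : rnk X x < X.card := by
  classical
  have hsub : X.filter (fun x' => x < x') ⊆ X.erase x := by
    intro w hw
    rcases Finset.mem_filter.mp hw with ⟨h1, h2⟩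
    exact Finset.mem_erase.mpr ⟨by omega, h1⟩
  have h1 := Finset.card_le_card hsub
  rw [Finset.card_erase_of_mem hx] at h1
  have h2 : 0 < X.card := Finset.card_pos.mpr ⟨x, hx⟩
  unfold rnk
  omega

lemma top_card (X : Finset ℤ) (j : ℕ) (hj : j ≤ X.card) :
    j ≤ (X.filter (fun x => rnk X x < j)).card := by
  classical
  have hsplit := Finset.card_filter_add_card_filter_not
    (s := X) (p := fun x => rnk X x < j)
  have hXT : (X.filter (fun x => ¬ rnk X x < j)).card ≤ X.card - j := by
    have h1 : (X.filter (fun x => ¬ rnk X x < j)).card ≤ (Finset.Ico j X.card).card := by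
      apply Finset.card_le_card_of_injOn (rnk X)
      · intro x hx
        rcases Finset.mem_filter.mp hx with ⟨h1, h2⟩
        exact Finset.mem_Ico.mpr ⟨by omega, rnk_lt_card X h1⟩
      · intro x hx x' hx' h
        by_contra hne
        rcases lt_or_gt_of_ne hne with hlt | hlt
        · have := rnk_strict X (Finset.mem_filter.mp hx').1 hlt; omega
        · have := rnk_strict X (Finset.mem_filter.mp hx).1 hlt; omega
    rwa [Nat.card_Ico] at h1
  omega

lemma pollard (j : ℕ) (b : ℕ) (hjb : j ≤ b) :
    ∀ (X Y : Finset ℤ), Y.card = b → j ≤ X.card →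
    j * (X.card + b - j) ≤ ∑ z ∈ X + Y, min (reps X Y z) j := by
  classical
  induction b, hjb using Nat.le_induction with
  | base =>
    intro X Y hY hjX
    have hrep : ∀ z ∈ X + Y, min (reps X Y z) j = reps X Y z := by
      intro z _
      have := reps_le_right X Y z
      rw [← hY] at *
      omega
    rw [Finset.sum_congr rfl hrep, sum_reps, hY, Nat.add_sub_cancel, Nat.mul_comm]
  | succ b hjb ih =>
    intro X Y hY hjX
    rcases Nat.eq_zero_or_pos j with hj0 | hj0
    · simp [hj0]
    have hYne : Y.Nonempty := Finset.card_pos.mp (by omega)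
    set M := Y.max' hYne with hM
    set Y' := Y.erase M with hY'def
    have hY'card : Y'.card = b := by
      rw [hY'def, Finset.card_erase_of_mem (Y.max'_mem hYne), hY]
      omega
    have hY'sub : Y' ⊆ Y := Finset.erase_subset _ _
    set T := X.filter (fun x => rnk X x < j) with hT
    have hTcard : j ≤ T.card := top_card X j hjX
    -- key: for x ∈ T, reps X Y' (x+M) < j
    have hkey : ∀ x ∈ T, reps X Y' (x + M) < j := by
      intro x hx
      rcases Finset.mem_filter.mp hx with ⟨hxX, hxr⟩
      have hle : reps X Y' (x + M) ≤ rnk X x := by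
        apply Finset.card_le_card_of_injOn Prod.fst
        · intro p hp
          rcases Finset.mem_filter.mp hp with ⟨hp1, hp2⟩
          rcases Finset.mem_product.mp hp1 with ⟨ha, hb⟩
          refine Finset.mem_filter.mpr ⟨ha, ?_⟩
          have hbY : p.2 ∈ Y := hY'sub hb
          have hbM : p.2 ≠ M := (Finset.mem_erase.mp hb).1
          have : p.2 ≤ M := Y.le_max' _ hbY
          omega
        · intro p hp q hq h
          have h1 := (Finset.mem_filter.mp hp).2
          have h2 := (Finset.mem_filter.mp hq).2
          exact Prod.ext h (by omega)
      omega
    -- pointwise bound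
    have hpt : ∀ z ∈ X + Y,
        min (reps X Y' z) j + (if z ∈ T.image (· + M) then 1 else 0)
          ≤ min (reps X Y z) j := by
      intro z hz
      by_cases hzi : z ∈ T.image (· + M)
      · rcases Finset.mem_image.mp hzi with ⟨x, hxT, hxz⟩
        have h1 : reps X Y' z < j := hxz ▸ hkey x hxT
        have h2 : reps X Y' z + 1 ≤ reps X Y z := by
          have : reps X Y z = ((X ×ˢ Y).filter (fun p => p.1 + p.2 = z)).card := rfl
          have hins : insert (x, M) ((X ×ˢ Y').filter (fun p => p.1 + p.2 = z))
              ⊆ (X ×ˢ Y).filter (fun p => p.1 + p.2 = z) := by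
            intro p hp
            rcases Finset.mem_insert.mp hp with hp | hp
            · subst hp
              refine Finset.mem_filter.mpr ⟨Finset.mem_product.mpr
                ⟨(Finset.mem_filter.mp hxT).1, Y.max'_mem hYne⟩, hxz⟩
            · rcases Finset.mem_filter.mp hp with ⟨hp1, hp2⟩
              rcases Finset.mem_product.mp hp1 with ⟨ha, hb⟩
              exact Finset.mem_filter.mpr ⟨Finset.mem_product.mpr ⟨ha, hY'sub hb⟩, hp2⟩
          have hnotin : (x, M) ∉ (X ×ˢ Y').filter (fun p => p.1 + p.2 = z) := by
            intro habs
            have := (Finset.mem_product.mp (Finset.mem_filter.mp habs).1).2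
            exact (Finset.mem_erase.mp this).1 rfl
          have := Finset.card_le_card hins
          rw [Finset.card_insert_of_notMem hnotin] at this
          exact this
        simp only [hzi, if_pos]
        omega
      · simp only [hzi, if_neg, not_false_iff, add_zero]
        have := reps_mono X Y Y' hY'sub z
        omega
    have hsum1 : ∑ z ∈ X + Y, (min (reps X Y' z) j + (if z ∈ T.image (· + M) then 1 else 0))
        ≤ ∑ z ∈ X + Y, min (reps X Y z) j := Finset.sum_le_sum hpt
    rw [Finset.sum_add_distrib] at hsum1
    -- indicator sum = T.card
    have himg : T.image (· + M) ⊆ X + Y := by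
      intro z hz
      rcases Finset.mem_image.mp hz with ⟨x, hxT, hxz⟩
      exact hxz ▸ Finset.add_mem_add (Finset.mem_filter.mp hxT).1 (Y.max'_mem hYne)
    have hind : ∑ z ∈ X + Y, (if z ∈ T.image (· + M) then 1 else 0) = (T.image (· + M)).card := by
      rw [Finset.sum_ite_mem, Finset.inter_eq_right.mpr himg, Finset.sum_const,
        smul_eq_mul, Nat.mul_one]
    have himgcard : (T.image (· + M)).card = T.card :=
      Finset.card_image_of_injective _ (add_left_injective M)
    -- sum over X+Y' vs X+Y
    have hsub2 : X + Y' ⊆ X + Y := Finset.add_subset_add_left hY'sub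
    have hsum2 : ∑ z ∈ X + Y', min (reps X Y' z) j ≤ ∑ z ∈ X + Y, min (reps X Y' z) j :=
      Finset.sum_le_sum_of_subset hsub2
    have hih := ih X Y' hY'card hjX
    have : j * (X.card + (b + 1) - j) ≤ j * (X.card + b - j) + j := by
      have : X.card + (b+1) - j = (X.card + b - j) + 1 := by omega
      rw [this, Nat.mul_add, Nat.mul_one]
    omega


lemma arith_main (a b c N : ℕ)
    (hb : ∀ j : ℕ, j ≤ a → j ≤ b → N + j * (a + b - j) ≤ c * j + a * b) :
    12 * N ≤ (a + b + c) ^ 2 + 3 := by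
  rcases le_or_gt (a + b) c with hc | hc
  · -- c large: N ≤ ab
    have h0 := hb 0 (Nat.zero_le _) (Nat.zero_le _)
    simp at h0
    have hz : (N : ℤ) ≤ (a : ℤ) * b := by exact_mod_cast h0
    have hcz : (a : ℤ) + b ≤ c := by exact_mod_cast hc
    have : 12 * (N : ℤ) ≤ ((a : ℤ) + b + c) ^ 2 + 3 := by
      nlinarith [sq_nonneg ((a : ℤ) - b), sq_nonneg ((a : ℤ) + b), Int.natCast_nonneg a,
        Int.natCast_nonneg b, Int.natCast_nonneg c]
    exact_mod_cast this
  · set d := a + b - c with hd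
    have hd1 : 1 ≤ d := by omega
    rcases le_or_gt (d / 2) (min a b) with hsmall | hbig
    · set j := d / 2 with hj
      have hja : j ≤ a := le_trans (le_trans hsmall (min_le_left _ _)) (le_refl _)
      have hjb : j ≤ b := le_trans hsmall (min_le_right _ _)
      have h1 := hb j hja hjb
      -- cast to ℤ
      have h1z : (N : ℤ) + j * (a + b - j) ≤ c * j + a * b := by
        have : ((a + b - j : ℕ) : ℤ) = (a : ℤ) + b - j := by omega
        push_cast [← this]
        exact_mod_cast h1
      have hdz : (d : ℤ) = (a : ℤ) + b - c := by omega
      have hjd : (j : ℤ) = (d : ℤ) / 2 ∧ 2 * (j : ℤ) ≤ d ∧ (d : ℤ) ≤ 2 * j + 1 := by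
        constructor
        · exact_mod_cast congrArg Nat.cast hj |>.trans (by push_cast [Int.natCast_ediv]; norm_num)
        · omega
      obtain ⟨-, hj2, hj3⟩ := hjd
      have : 12 * (N : ℤ) ≤ ((a : ℤ) + b + c) ^ 2 + 3 := by
        nlinarith [sq_nonneg ((a : ℤ) - b), sq_nonneg (2 * (c : ℤ) - a - b),
          sq_nonneg (2 * (j : ℤ) - d), Int.natCast_nonneg j, Int.natCast_nonneg c]
      exact_mod_cast this
    · -- j = min a b, N ≤ c * min a b
      set m := min a b with hm
      have h1 := hb m (min_le_left _ _) (min_le_right _ _)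
      have hNm : N ≤ c * m := by
        have : m * (a + b - m) = a * b := by
          rcases le_total a b with h | h
          · have : m = a := by omega
            rw [this]
            have : a + b - a = b := by omega
            rw [this]
          · have : m = b := by omega
            rw [this, Nat.mul_comm]
            have : a + b - b = a := by omega
            rw [this, Nat.mul_comm]
        omega
      have hdm : 2 * m + 1 ≤ d := by omega
      -- so min(a,b) + c < max(a,b)
      have hz : (N : ℤ) ≤ (c : ℤ) * m := by exact_mod_cast hNm
      have hmz : (m : ℤ) = min (a : ℤ) b := by
        rcases le_total a b with h | h
        · have h' : (a:ℤ) ≤ b := by exact_mod_cast h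
          rw [min_eq_left h']; omega
        · have h' : (b:ℤ) ≤ a := by exact_mod_cast h
          rw [min_eq_right h']; omega
      have hdm' : 2 * (m : ℤ) + 1 ≤ (a : ℤ) + b - c := by omega
      have : 12 * (N : ℤ) ≤ ((a : ℤ) + b + c) ^ 2 + 3 := by
        rcases le_total (a : ℤ) (b : ℤ) with h | h
        · have hma : (m : ℤ) = a := by rw [hmz, min_eq_left h]
          rw [hma] at hz hdm'
          nlinarith [sq_nonneg ((a : ℤ) - c), Int.natCast_nonneg a, Int.natCast_nonneg c]
        · have hmb : (m : ℤ) = b := by rw [hmz, min_eq_right h]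
          rw [hmb] at hz hdm'
          nlinarith [sq_nonneg ((b : ℤ) - c), Int.natCast_nonneg b, Int.natCast_nonneg c]
      exact_mod_cast this

lemma count_bound (S : Finset (ℤ × ℤ)) :
    12 * S.card ≤ ((S.image Prod.fst).card + (S.image Prod.snd).card
      + (S.image (fun p => p.1 + p.2)).card) ^ 2 + 3 := by
  classical
  set X := S.image Prod.fst with hX
  set Y := S.image Prod.snd with hYdef
  set Z := S.image (fun p => p.1 + p.2) with hZ
  apply arith_main
  intro j hja hjb
  -- N = sum of fibers over Z
  have hN : S.card = ∑ z ∈ Z, (S.filter (fun p => p.1 + p.2 = z)).card :=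
    Finset.card_eq_sum_card_fiberwise (fun p hp => Finset.mem_image_of_mem _ hp)
  have hfib : ∀ z ∈ Z, (S.filter (fun p => p.1 + p.2 = z)).card ≤ reps X Y z := by
    intro z _
    apply Finset.card_le_card
    intro p hp
    rcases Finset.mem_filter.mp hp with ⟨hp1, hp2⟩
    exact Finset.mem_filter.mpr ⟨Finset.mem_product.mpr
      ⟨Finset.mem_image_of_mem _ hp1, Finset.mem_image_of_mem _ hp1⟩, hp2⟩
  have hNle : S.card ≤ ∑ z ∈ Z, reps X Y z := hN ▸ Finset.sum_le_sum hfib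
  -- pointwise: reps ≤ j + (reps - min reps j)
  have hA : ∑ z ∈ Z, reps X Y z ≤ Z.card * j + ∑ z ∈ Z, (reps X Y z - min (reps X Y z) j) := by
    have h1 : ∀ z ∈ Z, reps X Y z ≤ j + (reps X Y z - min (reps X Y z) j) :=
      fun z _ => by omega
    have := Finset.sum_le_sum h1
    rwa [Finset.sum_add_distrib, Finset.sum_const, smul_eq_mul] at this
  have hZsub : Z ⊆ X + Y := by
    intro z hz
    rcases Finset.mem_image.mp hz with ⟨p, hp, hpz⟩
    exact hpz ▸ Finset.add_mem_add (Finset.mem_image_of_mem _ hp) (Finset.mem_image_of_mem _ hp)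
  have hB : ∑ z ∈ Z, (reps X Y z - min (reps X Y z) j)
      ≤ ∑ z ∈ X + Y, (reps X Y z - min (reps X Y z) j) :=
    Finset.sum_le_sum_of_subset hZsub
  have hW : ∑ z ∈ X + Y, (reps X Y z - min (reps X Y z) j)
      + ∑ z ∈ X + Y, min (reps X Y z) j = X.card * Y.card := by
    rw [← Finset.sum_add_distrib, ← sum_reps X Y]
    exact Finset.sum_congr rfl (fun z _ => by omega)
  have hP := pollard j Y.card hjb X Y rfl hja
  omega

lemma aux_dir (S : Finset (ℤ × ℤ)) (d : ℤ × ℤ) (u v : ℤ × ℤ → ℤ)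
    (hu : ∀ p, u (p + d) = u p) (hv : ∀ p, v (p + d) = v p + 1)
    (huv : ∀ p q, u p = u q → v p = v q → p = q) :
    (S.image u).card ≤ (S.filter (fun p => p + d ∉ S)).card := by
  classical
  set g : ℤ → ℤ × ℤ := fun c =>
    if h : (S.filter (fun p => u p = c)).Nonempty then
      (Finset.exists_max_image _ v h).choose else (0, 0) with hg
  have key : ∀ c ∈ S.image u, g c ∈ S.filter (fun p => u p = c) ∧
      ∀ q ∈ S.filter (fun p => u p = c), v q ≤ v (g c) := by
    intro c hc
    obtain ⟨p, hp, hpc⟩ := Finset.mem_image.mp hc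
    have hne : (S.filter (fun p => u p = c)).Nonempty :=
      ⟨p, Finset.mem_filter.mpr ⟨hp, hpc⟩⟩
    have := (Finset.exists_max_image (S.filter (fun p => u p = c)) v hne).choose_spec
    rw [hg]; simp only [dif_pos hne]
    exact ⟨this.1, this.2⟩
  apply Finset.card_le_card_of_injOn g
  · intro c hc
    obtain ⟨hmem, hmax⟩ := key c hc
    have hgS := Finset.mem_filter.mp hmem
    refine Finset.mem_filter.mpr ⟨hgS.1, ?_⟩
    intro habs
    have : g c + d ∈ S.filter (fun p => u p = c) :=
      Finset.mem_filter.mpr ⟨habs, by rw [hu]; exact hgS.2⟩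
    have := hmax _ this
    rw [hv] at this; omega
  · intro c hc c' hc' he
    have h1 := (Finset.mem_filter.mp (key c hc).1).2
    have h2 := (Finset.mem_filter.mp (key c' hc').1).2
    rw [he] at h1; rw [h1] at h2; exact h2

lemma extPer_eq (S : Finset (ℤ × ℤ)) :
    extPer S = ∑ d ∈ hexDirs, (S.filter (fun p => p + d ∉ S)).card := by
  classical
  unfold extPer
  simp only [Finset.card_filter]
  rw [Finset.sum_comm]

lemma extPer_ge (S : Finset (ℤ × ℤ)) :
    2 * (S.image Prod.fst).card + 2 * (S.image Prod.snd).card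
      + 2 * (S.image (fun p => p.1 + p.2)).card ≤ extPer S := by
  classical
  rw [extPer_eq]
  have h1 := aux_dir S (1,0) Prod.snd Prod.fst
    (fun p => by simp) (fun p => by simp) (fun p q h1 h2 => Prod.ext h2 h1)
  have h2 := aux_dir S (-1,0) Prod.snd (fun p => -p.1)
    (fun p => by simp) (fun p => by simp; ring) (by intro p q h1 h2; exact Prod.ext (by omega) h1)
  have h3 := aux_dir S (0,1) Prod.fst Prod.snd
    (fun p => by simp) (fun p => by simp) (fun p q h1 h2 => Prod.ext h1 h2)
  have h4 := aux_dir S (0,-1) Prod.fst (fun p => -p.2)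
    (fun p => by simp) (fun p => by simp; ring) (by intro p q h1 h2; exact Prod.ext h1 (by omega))
  have h5 := aux_dir S (1,-1) (fun p => p.1 + p.2) Prod.fst
    (fun p => by simp; ring) (fun p => by simp) (by intro p q h1 h2; exact Prod.ext h2 (by omega))
  have h6 := aux_dir S (-1,1) (fun p => p.1 + p.2) (fun p => -p.1)
    (fun p => by simp; ring) (fun p => by simp; ring) (by intro p q h1 h2; exact Prod.ext (by omega) (by omega))
  rw [show (hexDirs : Finset (ℤ × ℤ)) =
    insert (1,0) (insert (-1,0) (insert (0,1) (insert (0,-1) (insert (1,-1) {(-1,1)})))) from rfl]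
  rw [Finset.sum_insert (by decide), Finset.sum_insert (by decide),
    Finset.sum_insert (by decide), Finset.sum_insert (by decide),
    Finset.sum_insert (by decide), Finset.sum_singleton]
  omega

theorem stmt5 (n : ℕ) (S : Finset (ℤ × ℤ)) (hne : S.Nonempty) (hS : S.card = n) :
    (extPer S : ℝ) ≥ Real.sqrt (48 * (n : ℝ) - 12) ∧
    (extPer S) ^ 2 ≥ 48 * n - 12 := by
  have hper := extPer_ge S
  have hcnt := count_bound S
  rw [hS] at hcnt
  set a := (S.image Prod.fst).card
  set b := (S.image Prod.snd).card
  set c := (S.image (fun p => p.1 + p.2)).card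
  have key : 48 * n ≤ (extPer S) ^ 2 + 12 := by
    have h1 : 2 * (a + b + c) ≤ extPer S := by omega
    have h2 : (2 * (a + b + c)) ^ 2 ≤ (extPer S) ^ 2 :=
      Nat.pow_le_pow_left h1 2
    nlinarith [hcnt, h2]
  constructor
  · have h48 : 48 * (n : ℝ) - 12 ≤ ((extPer S : ℕ) : ℝ) ^ 2 := by
      have : (48 * n : ℕ) ≤ ((extPer S) ^ 2 + 12 : ℕ) := key
      have := (Nat.cast_le (α := ℝ)).mpr this
      push_cast at this
      linarith
    calc Real.sqrt (48 * (n : ℝ) - 12) ≤ Real.sqrt (((extPer S : ℕ) : ℝ) ^ 2) :=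
          Real.sqrt_le_sqrt h48
      _ = ((extPer S : ℕ) : ℝ) := Real.sqrt_sq (by positivity)
  · omega
end

section
/- For every n ≥ 1, the minimum exterior perimeter t(n) over sets of n cells of the hexagonal honeycomb satisfies t(n) < √(48n − 12) + 2; that is, there exists a set S of n cells with t(S) < √(48n − 12) + 2. -/
def inB (r : ℤ) (x : ℤ × ℤ) : Prop :=
  -r ≤ x.1 ∧ x.1 ≤ r ∧ -r ≤ x.2 ∧ x.2 ≤ r ∧ -r ≤ x.1 + x.2 ∧ x.1 + x.2 ≤ r

instance (r : ℤ) : DecidablePred (inB r) := fun x => by unfold inB; infer_instance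

noncomputable def ball (r : ℕ) : Finset (ℤ × ℤ) :=
  (Finset.Icc (-(r:ℤ), -(r:ℤ)) ((r:ℤ), (r:ℤ))).filter (inB r)

lemma mem_ball {r : ℕ} {x : ℤ × ℤ} : x ∈ ball r ↔ inB r x := by
  simp only [ball, Finset.mem_filter, Finset.mem_Icc, Prod.le_def, inB]; omega

def armD (r i : ℕ) : ℤ × ℤ :=
  if i ≤ r then ((r:ℤ)+1-i, (i:ℤ))
  else if i ≤ 2*r+2 then ((r:ℤ)+1-i, (r:ℤ)+1)
  else if i ≤ 3*r+3 then (-(r:ℤ)-1, 3*(r:ℤ)+3-i)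
  else if i ≤ 4*r+4 then ((i:ℤ)-4*r-4, 3*(r:ℤ)+3-i)
  else if i ≤ 5*r+5 then ((i:ℤ)-4*r-4, -(r:ℤ)-1)
  else ((r:ℤ)+1, (i:ℤ)-6*r-6)

lemma arm_ring {r i : ℕ} (h1 : 1 ≤ i) (h2 : i ≤ 6*r+6) :
    inB ((r:ℤ)+1) (armD r i) ∧ ¬ inB (r:ℤ) (armD r i) := by
  unfold armD inB
  split_ifs <;> (dsimp only) <;> omega

lemma arm_inj {r i j : ℕ} (hi1 : 1 ≤ i) (hi2 : i ≤ 6*r+6) (hj1 : 1 ≤ j) (hj2 : j ≤ 6*r+6)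
    (h : armD r i = armD r j) : i = j := by
  unfold armD at h
  split_ifs at h <;> simp only [Prod.mk.injEq] at h <;> omega

lemma ring_covered {r : ℕ} {x : ℤ × ℤ} (h1 : inB ((r:ℤ)+1) x) (h2 : ¬ inB (r:ℤ) x) :
    ∃ i, 1 ≤ i ∧ i ≤ 6*r+6 ∧ armD r i = x := by
  obtain ⟨a, b⟩ := x
  unfold inB at h1 h2; dsimp only at h1 h2
  by_cases hb : b = (r:ℤ)+1
  · exact ⟨((r:ℤ)+1-a).toNat, by omega, by omega, by
      unfold armD; split_ifs <;> simp only [Prod.mk.injEq] <;> omega⟩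
  · by_cases ha : a = -(r:ℤ)-1
    · exact ⟨(3*(r:ℤ)+3-b).toNat, by omega, by omega, by
        unfold armD; split_ifs <;> simp only [Prod.mk.injEq] <;> omega⟩
    · by_cases hab : a + b = -(r:ℤ)-1
      · exact ⟨(a+4*(r:ℤ)+4).toNat, by omega, by omega, by
          unfold armD; split_ifs <;> simp only [Prod.mk.injEq] <;> omega⟩
      · by_cases hb' : b = -(r:ℤ)-1
        · exact ⟨(a+4*(r:ℤ)+4).toNat, by omega, by omega, by
            unfold armD; split_ifs <;> simp only [Prod.mk.injEq] <;> omega⟩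
        · by_cases ha' : a = (r:ℤ)+1
          · exact ⟨(b+6*(r:ℤ)+6).toNat, by omega, by omega, by
              unfold armD; split_ifs <;> simp only [Prod.mk.injEq] <;> omega⟩
          · exact ⟨b.toNat, by omega, by omega, by
              unfold armD; split_ifs <;> simp only [Prod.mk.injEq] <;> omega⟩

noncomputable def SP (r k : ℕ) : Finset (ℤ × ℤ) := ball r ∪ (Finset.Icc 1 k).image (armD r)

lemma mem_SP {r k : ℕ} {x : ℤ × ℤ} :
    x ∈ SP r k ↔ inB (r:ℤ) x ∨ ∃ i, 1 ≤ i ∧ i ≤ k ∧ armD r i = x := by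
  simp only [SP, Finset.mem_union, mem_ball, Finset.mem_image, Finset.mem_Icc]
  constructor
  · rintro (h | ⟨i, ⟨hi1, hi2⟩, h3⟩)
    · exact Or.inl h
    · exact Or.inr ⟨i, hi1, hi2, h3⟩
  · rintro (h | ⟨i, hi1, hi2, h3⟩)
    · exact Or.inl h
    · exact Or.inr ⟨i, ⟨hi1, hi2⟩, h3⟩

lemma SP_zero {r : ℕ} : SP r 0 = ball r := by simp [SP]

lemma SP_succ {r k : ℕ} (hk : 1 ≤ k) : SP r k = insert (armD r k) (SP r (k-1)) := by
  have h : Finset.Icc 1 k = insert k (Finset.Icc 1 (k-1)) := by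
    ext j; simp only [Finset.mem_Icc, Finset.mem_insert]; omega
  rw [SP, h, Finset.image_insert, SP]
  rw [Finset.union_comm (ball r), Finset.insert_union, Finset.union_comm _ (ball r)]

lemma arm_notin_SP {r k t : ℕ} (hk : k < t) (ht : t ≤ 6*r+6) : armD r t ∉ SP r k := by
  rw [mem_SP]
  rintro (h | ⟨i, hi1, hi2, h3⟩)
  · exact (arm_ring (by omega) ht).2 h
  · have := arm_inj hi1 (by omega) (by omega) ht h3
    omega

lemma mem_SP_ball {r k : ℕ} {x : ℤ × ℤ} (h : inB (r:ℤ) x) : x ∈ SP r k :=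
  mem_SP.2 (Or.inl h)

lemma mem_SP_arm {r k j : ℕ} (h1 : 1 ≤ j) (h2 : j ≤ k) : armD r j ∈ SP r k :=
  mem_SP.2 (Or.inr ⟨j, h1, h2, rfl⟩)

lemma notmem_SP_far {r k : ℕ} {x : ℤ × ℤ} (hk : k ≤ 6*r+6) (h : ¬ inB ((r:ℤ)+1) x) :
    x ∉ SP r k := by
  rw [mem_SP]
  rintro (h1 | ⟨i, hi1, hi2, h3⟩)
  · apply h; unfold inB at *; omega
  · exact h (h3 ▸ (arm_ring hi1 (le_trans hi2 hk)).1)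

lemma card_SP {r k : ℕ} (hk : k ≤ 6*r+6) : (SP r k).card = (ball r).card + k := by
  induction k with
  | zero => simp [SP_zero]
  | succ k ih =>
    rw [SP_succ (by omega)]
    simp only [Nat.add_sub_cancel]
    rw [Finset.card_insert_of_notMem (arm_notin_SP (by omega) (by omega)), ih (by omega)]
    omega

lemma ball_succ {r : ℕ} : ball (r+1) = SP r (6*r+6) := by
  ext x
  rw [mem_ball, mem_SP]
  constructor
  · intro h
    by_cases h2 : inB (r:ℤ) x
    · exact Or.inl h2
    · exact Or.inr (ring_covered (by push_cast at h ⊢; exact h) h2)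
  · rintro (h | ⟨i, hi1, hi2, h3⟩)
    · unfold inB at *; push_cast; omega
    · have := (arm_ring hi1 hi2).1
      rw [h3] at this; unfold inB at *; push_cast; omega

lemma card_ball {r : ℕ} : (ball r).card = 3*r^2+3*r+1 := by
  induction r with
  | zero =>
    have h : ball 0 = {((0:ℤ),(0:ℤ))} := by
      ext x; rw [mem_ball]; unfold inB
      simp only [Finset.mem_singleton, Prod.ext_iff]; omega
    simp [h]
  | succ r ih =>
    rw [ball_succ, card_SP (le_refl _), ih]; ring

def FI (S : Finset (ℤ × ℤ)) : ℕ :=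
  ∑ x ∈ S, (hexDirs.filter (fun d => x + d ∈ S)).card

lemma extPer_add_FI (S : Finset (ℤ × ℤ)) : extPer S + FI S = 6 * S.card := by
  unfold extPer FI
  rw [← Finset.sum_add_distrib]
  rw [Finset.sum_congr rfl (g := fun _ => 6) (fun x _ => by
    rw [add_comm, Finset.card_filter_add_card_filter_not]
    rfl)]
  rw [Finset.sum_const, smul_eq_mul, mul_comm]

lemma neg_mem_hexDirs : ∀ d ∈ hexDirs, -d ∈ hexDirs := by decide

lemma sum_hit (S : Finset (ℤ × ℤ)) (c : ℤ × ℤ) :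
    ∑ x ∈ S, (hexDirs.filter (fun d => x + d = c)).card
      = (hexDirs.filter (fun d => c + d ∈ S)).card := by
  have step1 : ∑ x ∈ S, (hexDirs.filter (fun d => x + d = c)).card
      = (hexDirs.filter (fun d => c - d ∈ S)).card := by
    simp only [Finset.card_filter]
    rw [Finset.sum_comm]
    refine Finset.sum_congr rfl (fun d _ => ?_)
    simp only [← eq_sub_iff_add_eq]
    rw [Finset.sum_ite_eq' S (c - d) (fun _ => 1)]
  rw [step1]
  have himg : hexDirs.filter (fun d => c + d ∈ S)
      = (hexDirs.filter (fun d => c - d ∈ S)).image Neg.neg := by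
    ext d
    simp only [Finset.mem_image, Finset.mem_filter]
    constructor
    · intro ⟨hd, hs⟩
      exact ⟨-d, ⟨neg_mem_hexDirs d hd, by rwa [sub_neg_eq_add]⟩, neg_neg d⟩
    · rintro ⟨e, ⟨he, hs⟩, rfl⟩
      exact ⟨neg_mem_hexDirs e he, by rwa [sub_eq_add_neg] at hs⟩
  rw [himg, Finset.card_image_of_injective _ neg_injective]

lemma FI_insert {S : Finset (ℤ × ℤ)} {c : ℤ × ℤ} (hc : c ∉ S) :
    FI (insert c S) = FI S + 2 * (hexDirs.filter (fun d => c + d ∈ S)).card := by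
  unfold FI
  rw [Finset.sum_insert hc]
  have e1 : (hexDirs.filter (fun d => c + d ∈ insert c S))
      = (hexDirs.filter (fun d => c + d ∈ S)) := by
    apply Finset.filter_congr
    intro d hd
    simp only [Finset.mem_insert]
    constructor
    · rintro (h | h)
      · exact absurd (add_eq_left.mp h ▸ hd) (by decide)
      · exact h
    · exact fun h => Or.inr h
  have e2 : ∀ x ∈ S, (hexDirs.filter fun d => x + d ∈ insert c S).card
      = (hexDirs.filter fun d => x + d ∈ S).card
        + (hexDirs.filter fun d => x + d = c).card := by
    intro x hx
    have hu : (hexDirs.filter fun d => x + d ∈ insert c S)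
        = (hexDirs.filter fun d => x + d ∈ S) ∪ (hexDirs.filter fun d => x + d = c) := by
      ext d
      simp only [Finset.mem_filter, Finset.mem_union, Finset.mem_insert]
      tauto
    rw [hu, Finset.card_union_of_disjoint]
    rw [Finset.disjoint_left]
    intro d hd1 hd2
    rw [Finset.mem_filter] at hd1 hd2
    exact hc (hd2.2 ▸ hd1.2)
  rw [Finset.sum_congr rfl e2, Finset.sum_add_distrib, sum_hit, e1]
  ring

lemma extPer_insert {S : Finset (ℤ × ℤ)} {c : ℤ × ℤ} (hc : c ∉ S) :
    extPer (insert c S) + 2 * (hexDirs.filter (fun d => c + d ∈ S)).card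
      = extPer S + 6 := by
  have h1 := extPer_add_FI (insert c S)
  have h2 := extPer_add_FI S
  have h3 := FI_insert hc
  have h4 : (insert c S).card = S.card + 1 := Finset.card_insert_of_notMem hc
  omega

lemma hexCard (p : ℤ × ℤ → Prop) [DecidablePred p] :
    (hexDirs.filter p).card =
      (if p (1,0) then 1 else 0) + (if p (-1,0) then 1 else 0) + (if p (0,1) then 1 else 0)
      + (if p (0,-1) then 1 else 0) + (if p (1,-1) then 1 else 0)
      + (if p (-1,1) then 1 else 0) := by
  rw [Finset.card_filter]
  rw [show hexDirs = {(1,0),(-1,0),(0,1),(0,-1),(1,-1),(-1,1)} from rfl]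
  rw [Finset.sum_insert (by decide), Finset.sum_insert (by decide),
    Finset.sum_insert (by decide), Finset.sum_insert (by decide),
    Finset.sum_insert (by decide), Finset.sum_singleton]
  ring

def jv (r i : ℕ) : ℕ :=
  if r = 0 ∧ i = 1 then 1
  else if i = 1 ∨ i = r+1 ∨ i = 2*r+2 ∨ i = 3*r+3 ∨ i = 4*r+4 ∨ i = 5*r+5 then 2
  else 3
set_option maxHeartbeats 1000000 in
lemma jcase1 {r i : ℕ} (ha : r = 0) (hb : i = 1) :
    (hexDirs.filter (fun d => armD r i + d ∈ SP r (i-1))).card = 1 := by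
  have harm : armD r i = (((r:ℤ)+1-(i:ℤ)), ((r:ℤ)+1)) := by unfold armD; split_ifs <;> simp only [Prod.mk.injEq] <;> omega
  have f1 : armD r i + ((1:ℤ), (0:ℤ)) ∉ SP r (i-1) := by
    apply notmem_SP_far (by omega); rw [harm]; unfold inB; simp only [Prod.mk_add_mk]; omega
  have f2 : armD r i + ((-1:ℤ), (0:ℤ)) ∉ SP r (i-1) := by
    rw [show armD r i + ((-1:ℤ), (0:ℤ)) = armD r (i+1) from by
      rw [harm]; unfold armD; split_ifs <;> simp only [Prod.mk_add_mk, Prod.mk.injEq] <;> omega]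
    exact arm_notin_SP (by omega) (by omega)
  have f3 : armD r i + ((0:ℤ), (1:ℤ)) ∉ SP r (i-1) := by
    apply notmem_SP_far (by omega); rw [harm]; unfold inB; simp only [Prod.mk_add_mk]; omega
  have f4 : armD r i + ((0:ℤ), (-1:ℤ)) ∈ SP r (i-1) := by
    apply mem_SP_ball; rw [harm]; unfold inB; simp only [Prod.mk_add_mk]; omega
  have f5 : armD r i + ((1:ℤ), (-1:ℤ)) ∉ SP r (i-1) := by
    rw [show armD r i + ((1:ℤ), (-1:ℤ)) = armD r (6*r+6) from by
      rw [harm]; unfold armD; split_ifs <;> simp only [Prod.mk_add_mk, Prod.mk.injEq] <;> omega]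
    exact arm_notin_SP (by omega) (by omega)
  have f6 : armD r i + ((-1:ℤ), (1:ℤ)) ∉ SP r (i-1) := by
    apply notmem_SP_far (by omega); rw [harm]; unfold inB; simp only [Prod.mk_add_mk]; omega
  rw [hexCard]
  simp only [f1, f2, f3, f4, f5, f6, if_true, if_false]

set_option maxHeartbeats 1000000 in
lemma jcase2 {r i : ℕ} (ha : 1 ≤ r) (hb : i = 1) :
    (hexDirs.filter (fun d => armD r i + d ∈ SP r (i-1))).card = 2 := by
  have harm : armD r i = (((r:ℤ)+1-(i:ℤ)), ((i:ℤ))) := by unfold armD; split_ifs <;> simp only [Prod.mk.injEq] <;> omega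
  have f1 : armD r i + ((1:ℤ), (0:ℤ)) ∉ SP r (i-1) := by
    apply notmem_SP_far (by omega); rw [harm]; unfold inB; simp only [Prod.mk_add_mk]; omega
  have f2 : armD r i + ((-1:ℤ), (0:ℤ)) ∈ SP r (i-1) := by
    apply mem_SP_ball; rw [harm]; unfold inB; simp only [Prod.mk_add_mk]; omega
  have f3 : armD r i + ((0:ℤ), (1:ℤ)) ∉ SP r (i-1) := by
    apply notmem_SP_far (by omega); rw [harm]; unfold inB; simp only [Prod.mk_add_mk]; omega
  have f4 : armD r i + ((0:ℤ), (-1:ℤ)) ∈ SP r (i-1) := by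
    apply mem_SP_ball; rw [harm]; unfold inB; simp only [Prod.mk_add_mk]; omega
  have f5 : armD r i + ((1:ℤ), (-1:ℤ)) ∉ SP r (i-1) := by
    rw [show armD r i + ((1:ℤ), (-1:ℤ)) = armD r (6*r+6) from by
      rw [harm]; unfold armD; split_ifs <;> simp only [Prod.mk_add_mk, Prod.mk.injEq] <;> omega]
    exact arm_notin_SP (by omega) (by omega)
  have f6 : armD r i + ((-1:ℤ), (1:ℤ)) ∉ SP r (i-1) := by
    rw [show armD r i + ((-1:ℤ), (1:ℤ)) = armD r (i+1) from by
      rw [harm]; unfold armD; split_ifs <;> simp only [Prod.mk_add_mk, Prod.mk.injEq] <;> omega]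
    exact arm_notin_SP (by omega) (by omega)
  rw [hexCard]
  simp only [f1, f2, f3, f4, f5, f6, if_true, if_false]

set_option maxHeartbeats 1000000 in
lemma jcase3 {r i : ℕ} (ha : 2 ≤ i) (hb : i ≤ r) :
    (hexDirs.filter (fun d => armD r i + d ∈ SP r (i-1))).card = 3 := by
  have harm : armD r i = (((r:ℤ)+1-(i:ℤ)), ((i:ℤ))) := by unfold armD; split_ifs <;> simp only [Prod.mk.injEq] <;> omega
  have f1 : armD r i + ((1:ℤ), (0:ℤ)) ∉ SP r (i-1) := by
    apply notmem_SP_far (by omega); rw [harm]; unfold inB; simp only [Prod.mk_add_mk]; omega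
  have f2 : armD r i + ((-1:ℤ), (0:ℤ)) ∈ SP r (i-1) := by
    apply mem_SP_ball; rw [harm]; unfold inB; simp only [Prod.mk_add_mk]; omega
  have f3 : armD r i + ((0:ℤ), (1:ℤ)) ∉ SP r (i-1) := by
    apply notmem_SP_far (by omega); rw [harm]; unfold inB; simp only [Prod.mk_add_mk]; omega
  have f4 : armD r i + ((0:ℤ), (-1:ℤ)) ∈ SP r (i-1) := by
    apply mem_SP_ball; rw [harm]; unfold inB; simp only [Prod.mk_add_mk]; omega
  have f5 : armD r i + ((1:ℤ), (-1:ℤ)) ∈ SP r (i-1) := by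
    rw [show armD r i + ((1:ℤ), (-1:ℤ)) = armD r (i-1) from by
      rw [harm]; unfold armD; split_ifs <;> simp only [Prod.mk_add_mk, Prod.mk.injEq] <;> omega]
    exact mem_SP_arm (by omega) (by omega)
  have f6 : armD r i + ((-1:ℤ), (1:ℤ)) ∉ SP r (i-1) := by
    rw [show armD r i + ((-1:ℤ), (1:ℤ)) = armD r (i+1) from by
      rw [harm]; unfold armD; split_ifs <;> simp only [Prod.mk_add_mk, Prod.mk.injEq] <;> omega]
    exact arm_notin_SP (by omega) (by omega)
  rw [hexCard]
  simp only [f1, f2, f3, f4, f5, f6, if_true, if_false]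

set_option maxHeartbeats 1000000 in
lemma jcase4 {r i : ℕ} (ha : i = r+1) (hb : 1 ≤ r) :
    (hexDirs.filter (fun d => armD r i + d ∈ SP r (i-1))).card = 2 := by
  have harm : armD r i = (((r:ℤ)+1-(i:ℤ)), ((r:ℤ)+1)) := by unfold armD; split_ifs <;> simp only [Prod.mk.injEq] <;> omega
  have f1 : armD r i + ((1:ℤ), (0:ℤ)) ∉ SP r (i-1) := by
    apply notmem_SP_far (by omega); rw [harm]; unfold inB; simp only [Prod.mk_add_mk]; omega
  have f2 : armD r i + ((-1:ℤ), (0:ℤ)) ∉ SP r (i-1) := by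
    rw [show armD r i + ((-1:ℤ), (0:ℤ)) = armD r (i+1) from by
      rw [harm]; unfold armD; split_ifs <;> simp only [Prod.mk_add_mk, Prod.mk.injEq] <;> omega]
    exact arm_notin_SP (by omega) (by omega)
  have f3 : armD r i + ((0:ℤ), (1:ℤ)) ∉ SP r (i-1) := by
    apply notmem_SP_far (by omega); rw [harm]; unfold inB; simp only [Prod.mk_add_mk]; omega
  have f4 : armD r i + ((0:ℤ), (-1:ℤ)) ∈ SP r (i-1) := by
    apply mem_SP_ball; rw [harm]; unfold inB; simp only [Prod.mk_add_mk]; omega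
  have f5 : armD r i + ((1:ℤ), (-1:ℤ)) ∈ SP r (i-1) := by
    rw [show armD r i + ((1:ℤ), (-1:ℤ)) = armD r (i-1) from by
      rw [harm]; unfold armD; split_ifs <;> simp only [Prod.mk_add_mk, Prod.mk.injEq] <;> omega]
    exact mem_SP_arm (by omega) (by omega)
  have f6 : armD r i + ((-1:ℤ), (1:ℤ)) ∉ SP r (i-1) := by
    apply notmem_SP_far (by omega); rw [harm]; unfold inB; simp only [Prod.mk_add_mk]; omega
  rw [hexCard]
  simp only [f1, f2, f3, f4, f5, f6, if_true, if_false]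

set_option maxHeartbeats 1000000 in
lemma jcase5 {r i : ℕ} (ha : r+2 ≤ i) (hb : i ≤ 2*r+1) :
    (hexDirs.filter (fun d => armD r i + d ∈ SP r (i-1))).card = 3 := by
  have harm : armD r i = (((r:ℤ)+1-(i:ℤ)), ((r:ℤ)+1)) := by unfold armD; split_ifs <;> simp only [Prod.mk.injEq] <;> omega
  have f1 : armD r i + ((1:ℤ), (0:ℤ)) ∈ SP r (i-1) := by
    rw [show armD r i + ((1:ℤ), (0:ℤ)) = armD r (i-1) from by
      rw [harm]; unfold armD; split_ifs <;> simp only [Prod.mk_add_mk, Prod.mk.injEq] <;> omega]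
    exact mem_SP_arm (by omega) (by omega)
  have f2 : armD r i + ((-1:ℤ), (0:ℤ)) ∉ SP r (i-1) := by
    rw [show armD r i + ((-1:ℤ), (0:ℤ)) = armD r (i+1) from by
      rw [harm]; unfold armD; split_ifs <;> simp only [Prod.mk_add_mk, Prod.mk.injEq] <;> omega]
    exact arm_notin_SP (by omega) (by omega)
  have f3 : armD r i + ((0:ℤ), (1:ℤ)) ∉ SP r (i-1) := by
    apply notmem_SP_far (by omega); rw [harm]; unfold inB; simp only [Prod.mk_add_mk]; omega
  have f4 : armD r i + ((0:ℤ), (-1:ℤ)) ∈ SP r (i-1) := by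
    apply mem_SP_ball; rw [harm]; unfold inB; simp only [Prod.mk_add_mk]; omega
  have f5 : armD r i + ((1:ℤ), (-1:ℤ)) ∈ SP r (i-1) := by
    apply mem_SP_ball; rw [harm]; unfold inB; simp only [Prod.mk_add_mk]; omega
  have f6 : armD r i + ((-1:ℤ), (1:ℤ)) ∉ SP r (i-1) := by
    apply notmem_SP_far (by omega); rw [harm]; unfold inB; simp only [Prod.mk_add_mk]; omega
  rw [hexCard]
  simp only [f1, f2, f3, f4, f5, f6, if_true, if_false]

set_option maxHeartbeats 1000000 in
lemma jcase6 {r i : ℕ} (ha : i = 2*r+2) :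
    (hexDirs.filter (fun d => armD r i + d ∈ SP r (i-1))).card = 2 := by
  have harm : armD r i = (((r:ℤ)+1-(i:ℤ)), ((r:ℤ)+1)) := by unfold armD; split_ifs <;> simp only [Prod.mk.injEq] <;> omega
  have f1 : armD r i + ((1:ℤ), (0:ℤ)) ∈ SP r (i-1) := by
    rw [show armD r i + ((1:ℤ), (0:ℤ)) = armD r (i-1) from by
      rw [harm]; unfold armD; split_ifs <;> simp only [Prod.mk_add_mk, Prod.mk.injEq] <;> omega]
    exact mem_SP_arm (by omega) (by omega)
  have f2 : armD r i + ((-1:ℤ), (0:ℤ)) ∉ SP r (i-1) := by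
    apply notmem_SP_far (by omega); rw [harm]; unfold inB; simp only [Prod.mk_add_mk]; omega
  have f3 : armD r i + ((0:ℤ), (1:ℤ)) ∉ SP r (i-1) := by
    apply notmem_SP_far (by omega); rw [harm]; unfold inB; simp only [Prod.mk_add_mk]; omega
  have f4 : armD r i + ((0:ℤ), (-1:ℤ)) ∉ SP r (i-1) := by
    rw [show armD r i + ((0:ℤ), (-1:ℤ)) = armD r (i+1) from by
      rw [harm]; unfold armD; split_ifs <;> simp only [Prod.mk_add_mk, Prod.mk.injEq] <;> omega]
    exact arm_notin_SP (by omega) (by omega)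
  have f5 : armD r i + ((1:ℤ), (-1:ℤ)) ∈ SP r (i-1) := by
    apply mem_SP_ball; rw [harm]; unfold inB; simp only [Prod.mk_add_mk]; omega
  have f6 : armD r i + ((-1:ℤ), (1:ℤ)) ∉ SP r (i-1) := by
    apply notmem_SP_far (by omega); rw [harm]; unfold inB; simp only [Prod.mk_add_mk]; omega
  rw [hexCard]
  simp only [f1, f2, f3, f4, f5, f6, if_true, if_false]

set_option maxHeartbeats 1000000 in
lemma jcase7 {r i : ℕ} (ha : 2*r+3 ≤ i) (hb : i ≤ 3*r+2) :
    (hexDirs.filter (fun d => armD r i + d ∈ SP r (i-1))).card = 3 := by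
  have harm : armD r i = ((-(r:ℤ)-1), (3*(r:ℤ)+3-(i:ℤ))) := by unfold armD; split_ifs <;> simp only [Prod.mk.injEq] <;> omega
  have f1 : armD r i + ((1:ℤ), (0:ℤ)) ∈ SP r (i-1) := by
    apply mem_SP_ball; rw [harm]; unfold inB; simp only [Prod.mk_add_mk]; omega
  have f2 : armD r i + ((-1:ℤ), (0:ℤ)) ∉ SP r (i-1) := by
    apply notmem_SP_far (by omega); rw [harm]; unfold inB; simp only [Prod.mk_add_mk]; omega
  have f3 : armD r i + ((0:ℤ), (1:ℤ)) ∈ SP r (i-1) := by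
    rw [show armD r i + ((0:ℤ), (1:ℤ)) = armD r (i-1) from by
      rw [harm]; unfold armD; split_ifs <;> simp only [Prod.mk_add_mk, Prod.mk.injEq] <;> omega]
    exact mem_SP_arm (by omega) (by omega)
  have f4 : armD r i + ((0:ℤ), (-1:ℤ)) ∉ SP r (i-1) := by
    rw [show armD r i + ((0:ℤ), (-1:ℤ)) = armD r (i+1) from by
      rw [harm]; unfold armD; split_ifs <;> simp only [Prod.mk_add_mk, Prod.mk.injEq] <;> omega]
    exact arm_notin_SP (by omega) (by omega)
  have f5 : armD r i + ((1:ℤ), (-1:ℤ)) ∈ SP r (i-1) := by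
    apply mem_SP_ball; rw [harm]; unfold inB; simp only [Prod.mk_add_mk]; omega
  have f6 : armD r i + ((-1:ℤ), (1:ℤ)) ∉ SP r (i-1) := by
    apply notmem_SP_far (by omega); rw [harm]; unfold inB; simp only [Prod.mk_add_mk]; omega
  rw [hexCard]
  simp only [f1, f2, f3, f4, f5, f6, if_true, if_false]

set_option maxHeartbeats 1000000 in
lemma jcase8 {r i : ℕ} (ha : i = 3*r+3) :
    (hexDirs.filter (fun d => armD r i + d ∈ SP r (i-1))).card = 2 := by
  have harm : armD r i = ((-(r:ℤ)-1), (3*(r:ℤ)+3-(i:ℤ))) := by unfold armD; split_ifs <;> simp only [Prod.mk.injEq] <;> omega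
  have f1 : armD r i + ((1:ℤ), (0:ℤ)) ∈ SP r (i-1) := by
    apply mem_SP_ball; rw [harm]; unfold inB; simp only [Prod.mk_add_mk]; omega
  have f2 : armD r i + ((-1:ℤ), (0:ℤ)) ∉ SP r (i-1) := by
    apply notmem_SP_far (by omega); rw [harm]; unfold inB; simp only [Prod.mk_add_mk]; omega
  have f3 : armD r i + ((0:ℤ), (1:ℤ)) ∈ SP r (i-1) := by
    rw [show armD r i + ((0:ℤ), (1:ℤ)) = armD r (i-1) from by
      rw [harm]; unfold armD; split_ifs <;> simp only [Prod.mk_add_mk, Prod.mk.injEq] <;> omega]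
    exact mem_SP_arm (by omega) (by omega)
  have f4 : armD r i + ((0:ℤ), (-1:ℤ)) ∉ SP r (i-1) := by
    apply notmem_SP_far (by omega); rw [harm]; unfold inB; simp only [Prod.mk_add_mk]; omega
  have f5 : armD r i + ((1:ℤ), (-1:ℤ)) ∉ SP r (i-1) := by
    rw [show armD r i + ((1:ℤ), (-1:ℤ)) = armD r (i+1) from by
      rw [harm]; unfold armD; split_ifs <;> simp only [Prod.mk_add_mk, Prod.mk.injEq] <;> omega]
    exact arm_notin_SP (by omega) (by omega)
  have f6 : armD r i + ((-1:ℤ), (1:ℤ)) ∉ SP r (i-1) := by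
    apply notmem_SP_far (by omega); rw [harm]; unfold inB; simp only [Prod.mk_add_mk]; omega
  rw [hexCard]
  simp only [f1, f2, f3, f4, f5, f6, if_true, if_false]

set_option maxHeartbeats 1000000 in
lemma jcase9 {r i : ℕ} (ha : 3*r+4 ≤ i) (hb : i ≤ 4*r+3) :
    (hexDirs.filter (fun d => armD r i + d ∈ SP r (i-1))).card = 3 := by
  have harm : armD r i = (((i:ℤ)-4*(r:ℤ)-4), (3*(r:ℤ)+3-(i:ℤ))) := by unfold armD; split_ifs <;> simp only [Prod.mk.injEq] <;> omega
  have f1 : armD r i + ((1:ℤ), (0:ℤ)) ∈ SP r (i-1) := by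
    apply mem_SP_ball; rw [harm]; unfold inB; simp only [Prod.mk_add_mk]; omega
  have f2 : armD r i + ((-1:ℤ), (0:ℤ)) ∉ SP r (i-1) := by
    apply notmem_SP_far (by omega); rw [harm]; unfold inB; simp only [Prod.mk_add_mk]; omega
  have f3 : armD r i + ((0:ℤ), (1:ℤ)) ∈ SP r (i-1) := by
    apply mem_SP_ball; rw [harm]; unfold inB; simp only [Prod.mk_add_mk]; omega
  have f4 : armD r i + ((0:ℤ), (-1:ℤ)) ∉ SP r (i-1) := by
    apply notmem_SP_far (by omega); rw [harm]; unfold inB; simp only [Prod.mk_add_mk]; omega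
  have f5 : armD r i + ((1:ℤ), (-1:ℤ)) ∉ SP r (i-1) := by
    rw [show armD r i + ((1:ℤ), (-1:ℤ)) = armD r (i+1) from by
      rw [harm]; unfold armD; split_ifs <;> simp only [Prod.mk_add_mk, Prod.mk.injEq] <;> omega]
    exact arm_notin_SP (by omega) (by omega)
  have f6 : armD r i + ((-1:ℤ), (1:ℤ)) ∈ SP r (i-1) := by
    rw [show armD r i + ((-1:ℤ), (1:ℤ)) = armD r (i-1) from by
      rw [harm]; unfold armD; split_ifs <;> simp only [Prod.mk_add_mk, Prod.mk.injEq] <;> omega]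
    exact mem_SP_arm (by omega) (by omega)
  rw [hexCard]
  simp only [f1, f2, f3, f4, f5, f6, if_true, if_false]

set_option maxHeartbeats 1000000 in
lemma jcase10 {r i : ℕ} (ha : i = 4*r+4) :
    (hexDirs.filter (fun d => armD r i + d ∈ SP r (i-1))).card = 2 := by
  have harm : armD r i = (((i:ℤ)-4*(r:ℤ)-4), (3*(r:ℤ)+3-(i:ℤ))) := by unfold armD; split_ifs <;> simp only [Prod.mk.injEq] <;> omega
  have f1 : armD r i + ((1:ℤ), (0:ℤ)) ∉ SP r (i-1) := by
    rw [show armD r i + ((1:ℤ), (0:ℤ)) = armD r (i+1) from by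
      rw [harm]; unfold armD; split_ifs <;> simp only [Prod.mk_add_mk, Prod.mk.injEq] <;> omega]
    exact arm_notin_SP (by omega) (by omega)
  have f2 : armD r i + ((-1:ℤ), (0:ℤ)) ∉ SP r (i-1) := by
    apply notmem_SP_far (by omega); rw [harm]; unfold inB; simp only [Prod.mk_add_mk]; omega
  have f3 : armD r i + ((0:ℤ), (1:ℤ)) ∈ SP r (i-1) := by
    apply mem_SP_ball; rw [harm]; unfold inB; simp only [Prod.mk_add_mk]; omega
  have f4 : armD r i + ((0:ℤ), (-1:ℤ)) ∉ SP r (i-1) := by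
    apply notmem_SP_far (by omega); rw [harm]; unfold inB; simp only [Prod.mk_add_mk]; omega
  have f5 : armD r i + ((1:ℤ), (-1:ℤ)) ∉ SP r (i-1) := by
    apply notmem_SP_far (by omega); rw [harm]; unfold inB; simp only [Prod.mk_add_mk]; omega
  have f6 : armD r i + ((-1:ℤ), (1:ℤ)) ∈ SP r (i-1) := by
    rw [show armD r i + ((-1:ℤ), (1:ℤ)) = armD r (i-1) from by
      rw [harm]; unfold armD; split_ifs <;> simp only [Prod.mk_add_mk, Prod.mk.injEq] <;> omega]
    exact mem_SP_arm (by omega) (by omega)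
  rw [hexCard]
  simp only [f1, f2, f3, f4, f5, f6, if_true, if_false]

set_option maxHeartbeats 1000000 in
lemma jcase11 {r i : ℕ} (ha : 4*r+5 ≤ i) (hb : i ≤ 5*r+4) :
    (hexDirs.filter (fun d => armD r i + d ∈ SP r (i-1))).card = 3 := by
  have harm : armD r i = (((i:ℤ)-4*(r:ℤ)-4), (-(r:ℤ)-1)) := by unfold armD; split_ifs <;> simp only [Prod.mk.injEq] <;> omega
  have f1 : armD r i + ((1:ℤ), (0:ℤ)) ∉ SP r (i-1) := by
    rw [show armD r i + ((1:ℤ), (0:ℤ)) = armD r (i+1) from by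
      rw [harm]; unfold armD; split_ifs <;> simp only [Prod.mk_add_mk, Prod.mk.injEq] <;> omega]
    exact arm_notin_SP (by omega) (by omega)
  have f2 : armD r i + ((-1:ℤ), (0:ℤ)) ∈ SP r (i-1) := by
    rw [show armD r i + ((-1:ℤ), (0:ℤ)) = armD r (i-1) from by
      rw [harm]; unfold armD; split_ifs <;> simp only [Prod.mk_add_mk, Prod.mk.injEq] <;> omega]
    exact mem_SP_arm (by omega) (by omega)
  have f3 : armD r i + ((0:ℤ), (1:ℤ)) ∈ SP r (i-1) := by
    apply mem_SP_ball; rw [harm]; unfold inB; simp only [Prod.mk_add_mk]; omega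
  have f4 : armD r i + ((0:ℤ), (-1:ℤ)) ∉ SP r (i-1) := by
    apply notmem_SP_far (by omega); rw [harm]; unfold inB; simp only [Prod.mk_add_mk]; omega
  have f5 : armD r i + ((1:ℤ), (-1:ℤ)) ∉ SP r (i-1) := by
    apply notmem_SP_far (by omega); rw [harm]; unfold inB; simp only [Prod.mk_add_mk]; omega
  have f6 : armD r i + ((-1:ℤ), (1:ℤ)) ∈ SP r (i-1) := by
    apply mem_SP_ball; rw [harm]; unfold inB; simp only [Prod.mk_add_mk]; omega
  rw [hexCard]
  simp only [f1, f2, f3, f4, f5, f6, if_true, if_false]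

set_option maxHeartbeats 1000000 in
lemma jcase12 {r i : ℕ} (ha : i = 5*r+5) :
    (hexDirs.filter (fun d => armD r i + d ∈ SP r (i-1))).card = 2 := by
  have harm : armD r i = (((i:ℤ)-4*(r:ℤ)-4), (-(r:ℤ)-1)) := by unfold armD; split_ifs <;> simp only [Prod.mk.injEq] <;> omega
  have f1 : armD r i + ((1:ℤ), (0:ℤ)) ∉ SP r (i-1) := by
    apply notmem_SP_far (by omega); rw [harm]; unfold inB; simp only [Prod.mk_add_mk]; omega
  have f2 : armD r i + ((-1:ℤ), (0:ℤ)) ∈ SP r (i-1) := by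
    rw [show armD r i + ((-1:ℤ), (0:ℤ)) = armD r (i-1) from by
      rw [harm]; unfold armD; split_ifs <;> simp only [Prod.mk_add_mk, Prod.mk.injEq] <;> omega]
    exact mem_SP_arm (by omega) (by omega)
  have f3 : armD r i + ((0:ℤ), (1:ℤ)) ∉ SP r (i-1) := by
    rw [show armD r i + ((0:ℤ), (1:ℤ)) = armD r (i+1) from by
      rw [harm]; unfold armD; split_ifs <;> simp only [Prod.mk_add_mk, Prod.mk.injEq] <;> omega]
    exact arm_notin_SP (by omega) (by omega)
  have f4 : armD r i + ((0:ℤ), (-1:ℤ)) ∉ SP r (i-1) := by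
    apply notmem_SP_far (by omega); rw [harm]; unfold inB; simp only [Prod.mk_add_mk]; omega
  have f5 : armD r i + ((1:ℤ), (-1:ℤ)) ∉ SP r (i-1) := by
    apply notmem_SP_far (by omega); rw [harm]; unfold inB; simp only [Prod.mk_add_mk]; omega
  have f6 : armD r i + ((-1:ℤ), (1:ℤ)) ∈ SP r (i-1) := by
    apply mem_SP_ball; rw [harm]; unfold inB; simp only [Prod.mk_add_mk]; omega
  rw [hexCard]
  simp only [f1, f2, f3, f4, f5, f6, if_true, if_false]

set_option maxHeartbeats 1000000 in
lemma jcase13 {r i : ℕ} (ha : 5*r+6 ≤ i) (hb : i ≤ 6*r+5) :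
    (hexDirs.filter (fun d => armD r i + d ∈ SP r (i-1))).card = 3 := by
  have harm : armD r i = (((r:ℤ)+1), ((i:ℤ)-6*(r:ℤ)-6)) := by unfold armD; split_ifs <;> simp only [Prod.mk.injEq] <;> omega
  have f1 : armD r i + ((1:ℤ), (0:ℤ)) ∉ SP r (i-1) := by
    apply notmem_SP_far (by omega); rw [harm]; unfold inB; simp only [Prod.mk_add_mk]; omega
  have f2 : armD r i + ((-1:ℤ), (0:ℤ)) ∈ SP r (i-1) := by
    apply mem_SP_ball; rw [harm]; unfold inB; simp only [Prod.mk_add_mk]; omega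
  have f3 : armD r i + ((0:ℤ), (1:ℤ)) ∉ SP r (i-1) := by
    rw [show armD r i + ((0:ℤ), (1:ℤ)) = armD r (i+1) from by
      rw [harm]; unfold armD; split_ifs <;> simp only [Prod.mk_add_mk, Prod.mk.injEq] <;> omega]
    exact arm_notin_SP (by omega) (by omega)
  have f4 : armD r i + ((0:ℤ), (-1:ℤ)) ∈ SP r (i-1) := by
    rw [show armD r i + ((0:ℤ), (-1:ℤ)) = armD r (i-1) from by
      rw [harm]; unfold armD; split_ifs <;> simp only [Prod.mk_add_mk, Prod.mk.injEq] <;> omega]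
    exact mem_SP_arm (by omega) (by omega)
  have f5 : armD r i + ((1:ℤ), (-1:ℤ)) ∉ SP r (i-1) := by
    apply notmem_SP_far (by omega); rw [harm]; unfold inB; simp only [Prod.mk_add_mk]; omega
  have f6 : armD r i + ((-1:ℤ), (1:ℤ)) ∈ SP r (i-1) := by
    apply mem_SP_ball; rw [harm]; unfold inB; simp only [Prod.mk_add_mk]; omega
  rw [hexCard]
  simp only [f1, f2, f3, f4, f5, f6, if_true, if_false]

set_option maxHeartbeats 1000000 in
lemma jcase14 {r i : ℕ} (ha : i = 6*r+6) :
    (hexDirs.filter (fun d => armD r i + d ∈ SP r (i-1))).card = 3 := by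
  have harm : armD r i = (((r:ℤ)+1), ((i:ℤ)-6*(r:ℤ)-6)) := by unfold armD; split_ifs <;> simp only [Prod.mk.injEq] <;> omega
  have f1 : armD r i + ((1:ℤ), (0:ℤ)) ∉ SP r (i-1) := by
    apply notmem_SP_far (by omega); rw [harm]; unfold inB; simp only [Prod.mk_add_mk]; omega
  have f2 : armD r i + ((-1:ℤ), (0:ℤ)) ∈ SP r (i-1) := by
    apply mem_SP_ball; rw [harm]; unfold inB; simp only [Prod.mk_add_mk]; omega
  have f3 : armD r i + ((0:ℤ), (1:ℤ)) ∉ SP r (i-1) := by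
    apply notmem_SP_far (by omega); rw [harm]; unfold inB; simp only [Prod.mk_add_mk]; omega
  have f4 : armD r i + ((0:ℤ), (-1:ℤ)) ∈ SP r (i-1) := by
    rw [show armD r i + ((0:ℤ), (-1:ℤ)) = armD r (i-1) from by
      rw [harm]; unfold armD; split_ifs <;> simp only [Prod.mk_add_mk, Prod.mk.injEq] <;> omega]
    exact mem_SP_arm (by omega) (by omega)
  have f5 : armD r i + ((1:ℤ), (-1:ℤ)) ∉ SP r (i-1) := by
    apply notmem_SP_far (by omega); rw [harm]; unfold inB; simp only [Prod.mk_add_mk]; omega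
  have f6 : armD r i + ((-1:ℤ), (1:ℤ)) ∈ SP r (i-1) := by
    rw [show armD r i + ((-1:ℤ), (1:ℤ)) = armD r (1) from by
      rw [harm]; unfold armD; split_ifs <;> simp only [Prod.mk_add_mk, Prod.mk.injEq] <;> omega]
    exact mem_SP_arm (by omega) (by omega)
  rw [hexCard]
  simp only [f1, f2, f3, f4, f5, f6, if_true, if_false]

lemma jcard {r i : ℕ} (h1 : 1 ≤ i) (h2 : i ≤ 6*r+6) :
    (hexDirs.filter (fun d => armD r i + d ∈ SP r (i-1))).card = jv r i := by
  have hjv : ∀ v : ℕ, jv r i = v → (hexDirs.filter (fun d => armD r i + d ∈ SP r (i-1))).card = v → (hexDirs.filter (fun d => armD r i + d ∈ SP r (i-1))).card = jv r i := by intro v hv hc; omega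
  rcases (by omega : (r = 0 ∧ i = 1) ∨ (1 ≤ r ∧ i = 1) ∨ (2 ≤ i ∧ i ≤ r) ∨ (i = r+1 ∧ 1 ≤ r) ∨ (r+2 ≤ i ∧ i ≤ 2*r+1) ∨ (i = 2*r+2) ∨ (2*r+3 ≤ i ∧ i ≤ 3*r+2) ∨ (i = 3*r+3) ∨ (3*r+4 ≤ i ∧ i ≤ 4*r+3) ∨ (i = 4*r+4) ∨ (4*r+5 ≤ i ∧ i ≤ 5*r+4) ∨ (i = 5*r+5) ∨ (5*r+6 ≤ i ∧ i ≤ 6*r+5) ∨ (i = 6*r+6)) with hr|hr|hr|hr|hr|hr|hr|hr|hr|hr|hr|hr|hr|hr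
  · exact hjv 1 (by unfold jv; split_ifs <;> omega) (jcase1 hr.1 hr.2)
  · exact hjv 2 (by unfold jv; split_ifs <;> omega) (jcase2 hr.1 hr.2)
  · exact hjv 3 (by unfold jv; split_ifs <;> omega) (jcase3 hr.1 hr.2)
  · exact hjv 2 (by unfold jv; split_ifs <;> omega) (jcase4 hr.1 hr.2)
  · exact hjv 3 (by unfold jv; split_ifs <;> omega) (jcase5 hr.1 hr.2)
  · exact hjv 2 (by unfold jv; split_ifs <;> omega) (jcase6 hr)
  · exact hjv 3 (by unfold jv; split_ifs <;> omega) (jcase7 hr.1 hr.2)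
  · exact hjv 2 (by unfold jv; split_ifs <;> omega) (jcase8 hr)
  · exact hjv 3 (by unfold jv; split_ifs <;> omega) (jcase9 hr.1 hr.2)
  · exact hjv 2 (by unfold jv; split_ifs <;> omega) (jcase10 hr)
  · exact hjv 3 (by unfold jv; split_ifs <;> omega) (jcase11 hr.1 hr.2)
  · exact hjv 2 (by unfold jv; split_ifs <;> omega) (jcase12 hr)
  · exact hjv 3 (by unfold jv; split_ifs <;> omega) (jcase13 hr.1 hr.2)
  · exact hjv 3 (by unfold jv; split_ifs <;> omega) (jcase14 hr)
def ev (r k : ℕ) : ℕ :=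
  if k = 0 then 12*r+6
  else if k = 6*r+6 then 12*r+18
  else if k ≤ r then 12*r+8
  else if k ≤ 2*r+1 then 12*r+10
  else if k ≤ 3*r+2 then 12*r+12
  else if k ≤ 4*r+3 then 12*r+14
  else if k ≤ 5*r+4 then 12*r+16
  else 12*r+18

set_option maxHeartbeats 1600000 in
lemma ev_step {r k : ℕ} (hk : k + 1 ≤ 6*r+6) :
    ev r (k+1) + 2 * jv r (k+1) = ev r k + 6 := by
  rcases (by omega : (r = 0 ∧ (k+1) = 1) ∨ (1 ≤ r ∧ (k+1) = 1) ∨ (2 ≤ (k+1) ∧ (k+1) ≤ r) ∨ ((k+1) = r+1 ∧ 1 ≤ r) ∨ (r+2 ≤ (k+1) ∧ (k+1) ≤ 2*r+1) ∨ ((k+1) = 2*r+2) ∨ (2*r+3 ≤ (k+1) ∧ (k+1) ≤ 3*r+2) ∨ ((k+1) = 3*r+3) ∨ (3*r+4 ≤ (k+1) ∧ (k+1) ≤ 4*r+3) ∨ ((k+1) = 4*r+4) ∨ (4*r+5 ≤ (k+1) ∧ (k+1) ≤ 5*r+4) ∨ ((k+1) = 5*r+5) ∨ (5*r+6 ≤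 (k+1) ∧ (k+1) ≤ 6*r+5) ∨ ((k+1) = 6*r+6)) with hr|hr|hr|hr|hr|hr|hr|hr|hr|hr|hr|hr|hr|hr
  · have e1 : ev r (k+1) = 10 := by unfold ev; split_ifs <;> first | contradiction | omega
    have e2 : ev r k = 6 := by unfold ev; split_ifs <;> first | contradiction | omega
    have e3 : jv r (k+1) = 1 := by unfold jv; split_ifs <;> first | contradiction | omega
    omega
  · have e1 : ev r (k+1) = 12*r+8 := by unfold ev; split_ifs <;> first | contradiction | omega
    have e2 : ev r k = 12*r+6 := by unfold ev; split_ifs <;> first | contradiction | omega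
    have e3 : jv r (k+1) = 2 := by unfold jv; split_ifs <;> first | contradiction | omega
    omega
  · have e1 : ev r (k+1) = 12*r+8 := by unfold ev; split_ifs <;> first | contradiction | omega
    have e2 : ev r k = 12*r+8 := by unfold ev; split_ifs <;> first | contradiction | omega
    have e3 : jv r (k+1) = 3 := by unfold jv; split_ifs <;> first | contradiction | omega
    omega
  · have e1 : ev r (k+1) = 12*r+10 := by unfold ev; split_ifs <;> first | contradiction | omega
    have e2 : ev r k = 12*r+8 := by unfold ev; split_ifs <;> first | contradiction | omega
    have e3 : jv r (k+1) = 2 := by unfold jv; split_ifs <;> first | contradiction | omega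
    omega
  · have e1 : ev r (k+1) = 12*r+10 := by unfold ev; split_ifs <;> first | contradiction | omega
    have e2 : ev r k = 12*r+10 := by unfold ev; split_ifs <;> first | contradiction | omega
    have e3 : jv r (k+1) = 3 := by unfold jv; split_ifs <;> first | contradiction | omega
    omega
  · have e1 : ev r (k+1) = 12*r+12 := by unfold ev; split_ifs <;> first | contradiction | omega
    have e2 : ev r k = 12*r+10 := by unfold ev; split_ifs <;> first | contradiction | omega
    have e3 : jv r (k+1) = 2 := by unfold jv; split_ifs <;> first | contradiction | omega
    omega
  · have e1 : ev r (k+1) = 12*r+12 := by unfold ev; split_ifs <;> first | contradiction | omega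
    have e2 : ev r k = 12*r+12 := by unfold ev; split_ifs <;> first | contradiction | omega
    have e3 : jv r (k+1) = 3 := by unfold jv; split_ifs <;> first | contradiction | omega
    omega
  · have e1 : ev r (k+1) = 12*r+14 := by unfold ev; split_ifs <;> first | contradiction | omega
    have e2 : ev r k = 12*r+12 := by unfold ev; split_ifs <;> first | contradiction | omega
    have e3 : jv r (k+1) = 2 := by unfold jv; split_ifs <;> first | contradiction | omega
    omega
  · have e1 : ev r (k+1) = 12*r+14 := by unfold ev; split_ifs <;> first | contradiction | omega
    have e2 : ev r k = 12*r+14 := by unfold ev; split_ifs <;> first | contradiction | omega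
    have e3 : jv r (k+1) = 3 := by unfold jv; split_ifs <;> first | contradiction | omega
    omega
  · have e1 : ev r (k+1) = 12*r+16 := by unfold ev; split_ifs <;> first | contradiction | omega
    have e2 : ev r k = 12*r+14 := by unfold ev; split_ifs <;> first | contradiction | omega
    have e3 : jv r (k+1) = 2 := by unfold jv; split_ifs <;> first | contradiction | omega
    omega
  · have e1 : ev r (k+1) = 12*r+16 := by unfold ev; split_ifs <;> first | contradiction | omega
    have e2 : ev r k = 12*r+16 := by unfold ev; split_ifs <;> first | contradiction | omega
    have e3 : jv r (k+1) = 3 := by unfold jv; split_ifs <;> first | contradiction | omega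
    omega
  · have e1 : ev r (k+1) = 12*r+18 := by unfold ev; split_ifs <;> first | contradiction | omega
    have e2 : ev r k = 12*r+16 := by unfold ev; split_ifs <;> first | contradiction | omega
    have e3 : jv r (k+1) = 2 := by unfold jv; split_ifs <;> first | contradiction | omega
    omega
  · have e1 : ev r (k+1) = 12*r+18 := by unfold ev; split_ifs <;> first | contradiction | omega
    have e2 : ev r k = 12*r+18 := by unfold ev; split_ifs <;> first | contradiction | omega
    have e3 : jv r (k+1) = 3 := by unfold jv; split_ifs <;> first | contradiction | omega
    omega
  · have e1 : ev r (k+1) = 12*r+18 := by unfold ev; split_ifs <;> first | contradiction | omega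
    have e2 : ev r k = 12*r+18 := by unfold ev; split_ifs <;> first | contradiction | omega
    have e3 : jv r (k+1) = 3 := by unfold jv; split_ifs <;> first | contradiction | omega
    omega
set_option maxHeartbeats 800000 in
lemma extPer_SP {r : ℕ} (hbase : extPer (ball r) = 12*r+6) :
    ∀ k, k ≤ 6*r+6 → extPer (SP r k) = ev r k := by
  intro k
  induction k with
  | zero =>
    intro _
    rw [SP_zero, hbase]
    unfold ev; simp
  | succ k ih =>
    intro hk
    have hins := extPer_insert (S := SP r k) (c := armD r (k+1))
      (arm_notin_SP (by omega) (by omega))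
    have hj := jcard (r := r) (i := k+1) (by omega) (by omega)
    simp only [Nat.add_sub_cancel] at hj
    have hstep := ev_step hk
    have ihk := ih (by omega)
    rw [SP_succ (by omega)]
    simp only [Nat.add_sub_cancel]
    omega

lemma extPer_ball : ∀ r : ℕ, extPer (ball r) = 12*r+6 := by
  intro r
  induction r with
  | zero =>
    have h : ball 0 = {((0:ℤ),(0:ℤ))} := by
      ext x; rw [mem_ball]; unfold inB
      simp only [Finset.mem_singleton, Prod.ext_iff]; omega
    rw [h]
    unfold extPer
    rw [Finset.sum_singleton, hexCard]
    norm_num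
  | succ r ih =>
    rw [ball_succ, extPer_SP ih (6*r+6) (le_refl _)]
    unfold ev
    split_ifs <;> first | contradiction | omega

lemma exists_rk : ∀ n : ℕ, 1 ≤ n → ∃ r k, k ≤ 6*r+5 ∧ n = 3*r^2+3*r+1+k := by
  intro n
  induction n with
  | zero => intro h; omega
  | succ n ih =>
    intro _
    by_cases hn : n = 0
    · refine ⟨0, 0, by omega, ?_⟩
      subst hn; norm_num
    · obtain ⟨r, k, hk1, hk2⟩ := ih (by omega)
      by_cases hkk : k = 6*r+5
      · refine ⟨r+1, 0, by omega, ?_⟩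
        have h : 3*(r+1)^2+3*(r+1)+1 = 3*r^2+3*r+1+(6*r+5)+1 := by ring
        omega
      · exact ⟨r, k+1, by omega, by omega⟩

set_option maxHeartbeats 1600000 in
lemma ev_ineq {r k : ℕ} (hk : k ≤ 6*r+5) :
    2 ≤ ev r k ∧ (ev r k - 2)^2 + 12 < 48*(3*r^2+3*r+1+k) := by
  rcases (by omega : k = 0 ∨ (1 ≤ k ∧ k ≤ r) ∨ (r+1 ≤ k ∧ k ≤ 2*r+1) ∨ (2*r+2 ≤ k ∧ k ≤ 3*r+2)
    ∨ (3*r+3 ≤ k ∧ k ≤ 4*r+3) ∨ (4*r+4 ≤ k ∧ k ≤ 5*r+4) ∨ (5*r+5 ≤ k ∧ k ≤ 6*r+5))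
    with hr|hr|hr|hr|hr|hr|hr
  · have e : ev r k = 12*r+6 := by unfold ev; split_ifs <;> first | contradiction | omega
    rw [e]
    constructor
    · omega
    · have h2 : (12*r+6-2)^2 = 144*r^2+96*r+16 := by
        have : 12*r+6-2 = 12*r+4 := by omega
        rw [this]; ring
      rw [h2]; nlinarith
  · have e : ev r k = 12*r+8 := by unfold ev; split_ifs <;> first | contradiction | omega
    rw [e]
    refine ⟨by omega, ?_⟩
    have h2 : (12*r+8-2)^2 = 144*r^2+144*r+36 := by
      have : 12*r+8-2 = 12*r+6 := by omega
      rw [this]; ring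
    rw [h2]; nlinarith
  · have e : ev r k = 12*r+10 := by unfold ev; split_ifs <;> first | contradiction | omega
    rw [e]
    refine ⟨by omega, ?_⟩
    have h2 : (12*r+10-2)^2 = 144*r^2+192*r+64 := by
      have : 12*r+10-2 = 12*r+8 := by omega
      rw [this]; ring
    rw [h2]; nlinarith
  · have e : ev r k = 12*r+12 := by unfold ev; split_ifs <;> first | contradiction | omega
    rw [e]
    refine ⟨by omega, ?_⟩
    have h2 : (12*r+12-2)^2 = 144*r^2+240*r+100 := by
      have : 12*r+12-2 = 12*r+10 := by omega
      rw [this]; ring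
    rw [h2]; nlinarith
  · have e : ev r k = 12*r+14 := by unfold ev; split_ifs <;> first | contradiction | omega
    rw [e]
    refine ⟨by omega, ?_⟩
    have h2 : (12*r+14-2)^2 = 144*r^2+288*r+144 := by
      have : 12*r+14-2 = 12*r+12 := by omega
      rw [this]; ring
    rw [h2]; nlinarith
  · have e : ev r k = 12*r+16 := by unfold ev; split_ifs <;> first | contradiction | omega
    rw [e]
    refine ⟨by omega, ?_⟩
    have h2 : (12*r+16-2)^2 = 144*r^2+336*r+196 := by
      have : 12*r+16-2 = 12*r+14 := by omega
      rw [this]; ring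
    rw [h2]; nlinarith
  · have e : ev r k = 12*r+18 := by unfold ev; split_ifs <;> first | contradiction | omega
    rw [e]
    refine ⟨by omega, ?_⟩
    have h2 : (12*r+18-2)^2 = 144*r^2+384*r+256 := by
      have : 12*r+18-2 = 12*r+16 := by omega
      rw [this]; ring
    rw [h2]; nlinarith

set_option maxHeartbeats 800000 in
theorem stmt8 (n : ℕ) (hn : 1 ≤ n) :
    (tmin n : ℝ) < Real.sqrt (48 * (n : ℝ) - 12) + 2 ∧
    ∃ S : Finset (ℤ × ℤ), S.card = n ∧
      (extPer S : ℝ) < Real.sqrt (48 * (n : ℝ) - 12) + 2 := by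
  obtain ⟨r, k, hk, hnrk⟩ := exists_rk n hn
  have hcard : (SP r k).card = n := by
    rw [card_SP (by omega), card_ball]; omega
  have hext : extPer (SP r k) = ev r k := extPer_SP (extPer_ball r) k (by omega)
  obtain ⟨hge2, hsq⟩ := ev_ineq hk
  have hbound : ((ev r k : ℝ)) < Real.sqrt (48 * (n : ℝ) - 12) + 2 := by
    have hsqR : ((ev r k : ℝ) - 2)^2 < 48 * (n : ℝ) - 12 := by
      have h1 : ((ev r k : ℝ) - 2) = ((ev r k - 2 : ℕ) : ℝ) := by
        push_cast [hge2]; ring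
      have h4 : (ev r k - 2)^2 + 12 < 48 * n := by rw [hnrk]; exact hsq
      have h5 : (((ev r k - 2 : ℕ)) : ℝ)^2 + 12 < 48 * (n : ℝ) := by exact_mod_cast h4
      rw [h1]; linarith
    have hnn : (0:ℝ) ≤ (ev r k : ℝ) - 2 := by
      have : (2:ℝ) ≤ (ev r k : ℝ) := by exact_mod_cast hge2
      linarith
    have := (Real.lt_sqrt hnn).mpr hsqR
    linarith
  constructor
  · have hle : tmin n ≤ extPer (SP r k) := Nat.sInf_le ⟨SP r k, hcard, rfl⟩
    have : (tmin n : ℝ) ≤ (extPer (SP r k) : ℝ) := by exact_mod_cast hle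
    rw [hext] at this
    linarith
  · exact ⟨SP r k, hcard, by rw [hext]; exact hbound⟩
end
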